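/- arXiv:1201.6330 — 7 statements merged into one kernel-verified Lean document; each statement's English description precedes it below -/
import Mathlib

section
/- Let G be a finite simple graph, C a longest cycle in G, and P a longest path in G \ C with endpoints x and y and length p ≥ 1. If x has at least 2 neighbors on C, y has at least 2 neighbors on C, and the neighborhood of x on C differs from the neighborhood of y on C, then when p = 1 the length of C is at least 3δ(G), where δ(G) is the minimum degree of G. -/
/-! Let `σ` be the successor map along `C` and write `A = N_C(x)`, `B = N_C(y)`, `S = A ∪ B`.
Since `xy` is an edge off `C`, maximality of `C` forbids the detours `v x σv`, `v x y σv` and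
`v x y σ²v` for `v ∈ A` (and symmetrically for `B`): hence `S` misses `σ S`, and `σ² v ∉ S` for
every `v ∈ A ∩ B`. The sets `S`, `σ S` and `σ² {v ∈ S | σ² v ∉ S}` are disjoint subsets of `C`.
As `σ` permutes `V(C)` in a single cycle, `σ²` cannot map a nonempty `A \ B` into itself
(otherwise `A \ B` and its `σ`-image would cover `C`, leaving no room for `B`), and likewise for
`B \ A`; counting then gives `|C| ≥ 3 (min |A| |B| + 1)`. Finally, `P` being a longest path off
`C` of length `1`, the only neighbour of `x` off `C` is `y` and vice versa, so
`δ(G) ≤ min |A| |B| + 1`. -/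

open SimpleGraph Finset

namespace Paper

variable {V : Type*}

/-- Number of connected components of `G` after deleting the vertex set `S`. -/
noncomputable def compCount (G : SimpleGraph V) (S : Set V) : ℕ :=
  Nat.card ((G.induce Sᶜ).ConnectedComponent)

/-- `G` is 1-tough: every cutset `S` satisfies `|S| ≥ s(G \ S)`. -/
def OneTough [Fintype V] (G : SimpleGraph V) : Prop :=
  ∀ S : Finset V, 1 < compCount G ↑S → compCount G ↑S ≤ S.card

/-- The toughness of `G` equals 1. -/
def ToughnessEqOne [Fintype V] (G : SimpleGraph V) : Prop :=
  OneTough G ∧ ∃ S : Finset V, 1 < compCount G ↑S ∧ compCount G ↑S = S.card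

/-- The vertex connectivity of `G` equals 2. -/
def ConnectivityEqTwo [Fintype V] (G : SimpleGraph V) : Prop :=
  (∀ S : Finset V, S.card ≤ 1 → (G.induce (↑S : Set V)ᶜ).Connected) ∧
  ∃ S : Finset V, S.card = 2 ∧ ¬ (G.induce (↑S : Set V)ᶜ).Connected

/-- `G` is 3-connected: it stays connected after removing any 2 vertices. -/
def ThreeConnected [Fintype V] (G : SimpleGraph V) : Prop :=
  ∀ S : Finset V, S.card ≤ 2 → (G.induce (↑S : Set V)ᶜ).Connected

/-- `c` is a longest cycle of `G`. -/
def IsLongestCycle {G : SimpleGraph V} {u : V} (c : G.Walk u u) : Prop :=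
  c.IsCycle ∧ ∀ (v : V) (d : G.Walk v v), d.IsCycle → d.length ≤ c.length

/-- The cycle `c` is dominating: `G \ V(c)` is edgeless. -/
def IsDominating {G : SimpleGraph V} {u : V} (c : G.Walk u u) : Prop :=
  ∀ a b : V, G.Adj a b → a ∈ c.support ∨ b ∈ c.support

/-- The walk `p` avoids all vertices of the cycle `c`. -/
def AvoidsCycle {G : SimpleGraph V} {u x y : V} (c : G.Walk u u) (p : G.Walk x y) : Prop :=
  ∀ v ∈ p.support, v ∉ c.support

/-- `p` is a longest path of `G \ V(c)`. -/
def IsLongestPathOutside {G : SimpleGraph V} {u x y : V} (c : G.Walk u u)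
    (p : G.Walk x y) : Prop :=
  p.IsPath ∧ AvoidsCycle c p ∧
  ∀ (a b : V) (q : G.Walk a b), q.IsPath → AvoidsCycle c q → q.length ≤ p.length

/-- `N_C(x)`: the neighbors of `x` lying on the cycle `c`. -/
def NC [Fintype V] [DecidableEq V] (G : SimpleGraph V) [DecidableRel G.Adj]
    {u : V} (c : G.Walk u u) (x : V) : Finset V :=
  (G.neighborFinset x).filter (fun v => v ∈ c.support)

/-- The interior vertices of a segment (the walk minus its endpoints). -/
def interior {G : SimpleGraph V} {a b : V} (I : G.Walk a b) : Set V :=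
  {v | v ∈ I.support ∧ v ≠ a ∧ v ≠ b}

/-- `I` is an elementary segment of the cycle `c` created by the attachment set `A`:
an arc of `c` between consecutive vertices of `A`. -/
def IsSegment {G : SimpleGraph V} {u : V} (c : G.Walk u u)
    (A : Finset V) {a b : V} (I : G.Walk a b) : Prop :=
  I.IsPath ∧ 1 ≤ I.length ∧ a ∈ A ∧ b ∈ A ∧
  (∀ v ∈ I.support, v ∈ c.support) ∧
  (∀ e ∈ I.edges, e ∈ c.edges) ∧
  ∀ v ∈ interior I, v ∉ A

/-- `L` is an intermediate path between the elementary segments `Ia` and `Ib`: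
it joins interior vertices of `Ia` and `Ib` and is internally disjoint from `c ∪ P`. -/
def IsIntermediatePath {G : SimpleGraph V} {u x y : V} (c : G.Walk u u) (P : G.Walk x y)
    {a b a' b' z w : V} (Ia : G.Walk a b) (Ib : G.Walk a' b') (L : G.Walk z w) : Prop :=
  L.IsPath ∧ 1 ≤ L.length ∧ z ∈ interior Ia ∧ w ∈ interior Ib ∧
  ∀ v ∈ L.support, (v ∈ c.support ∨ v ∈ P.support) → v = z ∨ v = w

/-- Membership in the exceptional class `𝔉₁`. -/
def InF1 [Fintype V] (H : SimpleGraph V) [DecidableRel H.Adj] (d : ℕ) : Prop :=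
  ∃ (x y₁ y₂ y₃ : V) (A : Fin 3 → Set V),
    (∀ i j, i ≠ j → A i ∩ A j = {x}) ∧
    (⋃ i, A i) = Set.univ ∧
    y₁ ∈ A 0 ∧ y₂ ∈ A 1 ∧ y₃ ∈ A 2 ∧ y₁ ≠ x ∧ y₂ ≠ x ∧ y₃ ≠ x ∧
    H.Adj y₁ y₂ ∧ H.Adj y₂ y₃ ∧ H.Adj y₁ y₃ ∧
    (∀ a b : V, H.Adj a b → (∃ i, a ∈ A i ∧ b ∈ A i) ∨
      s(a, b) ∈ ({s(y₁, y₂), s(y₂, y₃), s(y₁, y₃)} : Set (Sym2 V))) ∧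
    (∀ i, (H.induce (A i)).Connected) ∧
    Nat.card (A 0) = d + 1 ∧ Nat.card (A 1) = d + 1 ∧
    d + 1 ≤ Nat.card (A 2) ∧ Nat.card (A 2) ≤ d + 2 ∧
    H.minDegree = d ∧ 3 ≤ d

/-- Membership in the exceptional class `𝔉₂`. -/
def InF2 [Fintype V] (H : SimpleGraph V) [DecidableRel H.Adj] : Prop :=
  ∃ (x z y₁ y₂ y₃ : V) (A : Fin 3 → Set V),
    (∀ i j, i ≠ j → A i ∩ A j = {x}) ∧
    ((⋃ i, A i) ∪ {z}) = Set.univ ∧ z ∉ ⋃ i, A i ∧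
    y₁ ∈ A 0 ∧ y₂ ∈ A 1 ∧ y₃ ∈ A 2 ∧ y₁ ≠ x ∧ y₂ ≠ x ∧ y₃ ≠ x ∧
    H.Adj z y₁ ∧ H.Adj z y₂ ∧ H.Adj z y₃ ∧ H.Adj y₁ y₂ ∧
    (∀ a b : V, H.Adj a b → (∃ i, a ∈ A i ∧ b ∈ A i) ∨
      s(a, b) ∈ ({s(z, y₁), s(z, y₂), s(z, y₃), s(y₁, y₂), s(y₁, y₃), s(y₂, y₃),
        s(z, x)} : Set (Sym2 V))) ∧
    (∀ i, Nat.card (A i) = 4) ∧ H.minDegree = 3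

/-- Membership in the exceptional class `𝔉₃`. -/
def InF3 [Fintype V] (H : SimpleGraph V) [DecidableRel H.Adj] : Prop :=
  ∃ (x z y₁ y₂ y₃ : V) (A : Fin 3 → Set V),
    (∀ i j, i ≠ j → A i ∩ A j = {x}) ∧
    ((⋃ i, A i) ∪ {z}) = Set.univ ∧ z ∉ ⋃ i, A i ∧
    y₁ ∈ A 0 ∧ y₂ ∈ A 1 ∧ y₃ ∈ A 2 ∧ y₁ ≠ x ∧ y₂ ≠ x ∧ y₃ ≠ x ∧
    H.Adj z y₁ ∧ H.Adj z y₂ ∧ H.Adj z y₃ ∧ H.Adj z x ∧ H.Adj y₁ y₂ ∧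
    (∀ a b : V, H.Adj a b → (∃ i, a ∈ A i ∧ b ∈ A i) ∨
      s(a, b) ∈ ({s(z, y₁), s(z, y₂), s(z, y₃), s(z, x), s(y₁, y₂), s(y₁, y₃),
        s(y₂, y₃)} : Set (Sym2 V))) ∧
    (∀ i, Nat.card (A i) = 5) ∧ H.minDegree = 4

/-- Membership in the exceptional class `𝔉₄`. -/
def InF4 [Fintype V] (H : SimpleGraph V) [DecidableRel H.Adj] : Prop :=
  ∃ (x y : V) (z : Fin 4 → V) (A : Fin 4 → Set V),
    x ≠ y ∧
    (∀ i j, i ≠ j → A i ∩ A j = {x, y}) ∧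
    (⋃ i, A i) = Set.univ ∧
    (∀ i, z i ∈ A i ∧ z i ≠ x ∧ z i ≠ y) ∧
    H.Adj (z 0) (z 1) ∧ H.Adj (z 1) (z 2) ∧ H.Adj (z 0) (z 2) ∧
    (∀ a b : V, H.Adj a b → (∃ i, a ∈ A i ∧ b ∈ A i) ∨
      s(a, b) ∈ ({s(z 0, z 1), s(z 1, z 2), s(z 0, z 2)} : Set (Sym2 V))) ∧
    (∀ i, Nat.card (A i) = 5) ∧ H.minDegree = 4


end Paper

namespace Finset

variable {α : Type*} {σ : α → α} {Z : Finset α}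

theorem exists_iterate_two_notMem (hcyc : ∀ v ∈ Z, ∀ w ∈ Z, ∃ k, σ^[k] v = w)
    {X : Finset α} (hXZ : X ⊆ Z) (hX : X.Nonempty) {w : α} (hw : w ∈ Z) (hwX : w ∉ X)
    (hσw : ∀ v ∈ X, σ v ≠ w) : ∃ v ∈ X, σ (σ v) ∉ X := by
  by_contra! hclosed
  obtain ⟨v₀, hv₀⟩ := hX
  obtain ⟨n, rfl⟩ := hcyc v₀ (hXZ hv₀) w hw
  have hreach : ∀ k, σ^[k] v₀ ∈ X ∨ ∃ v ∈ X, σ v = σ^[k] v₀ := by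
    intro k
    induction k with
    | zero => exact .inl hv₀
    | succ k ih =>
      rw [Function.iterate_succ_apply']
      rcases ih with h | ⟨v, hv, h⟩
      · exact .inr ⟨_, h, rfl⟩
      · exact .inl (h ▸ hclosed v hv)
  rcases hreach n with h | ⟨v, hv, h⟩
  · exact hwX h
  · exact hσw v hv h

variable [DecidableEq α]

theorem two_mul_card_add_card_filter_le (hmaps : Set.MapsTo σ Z Z) (hinj : Set.InjOn σ Z)
    {S : Finset α} (hSZ : S ⊆ Z) (hS : ∀ v ∈ S, σ v ∉ S) :
    2 * #S + #{v ∈ S | σ (σ v) ∉ S} ≤ #Z := by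
  set T := {v ∈ S | σ (σ v) ∉ S}
  have hTS : T ⊆ S := filter_subset _ _
  have hinjS : Set.InjOn σ S := hinj.mono hSZ
  have hinj2 : Set.InjOn (σ ∘ σ) T := fun v hv w hw h =>
    hinjS (hTS hv) (hTS hw) (hinj (hmaps (hSZ (hTS hv))) (hmaps (hSZ (hTS hw))) h)
  have hdisj₁ : Disjoint S (S.image σ) := by
    rw [Finset.disjoint_right]
    rintro _ hw hwS
    obtain ⟨v, hv, rfl⟩ := mem_image.mp hw
    exact hS v hv hwS
  have hdisj₂ : Disjoint (S ∪ S.image σ) (T.image (σ ∘ σ)) := by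
    rw [Finset.disjoint_right]
    rintro _ hw hw'
    obtain ⟨v, hv, rfl⟩ := mem_image.mp hw
    rcases mem_union.mp hw' with h | h
    · exact (mem_filter.mp hv).2 h
    · obtain ⟨v', hv', hvv'⟩ := mem_image.mp h
      have : v' = σ v := hinj (hSZ hv') (hmaps (hSZ (hTS hv))) hvv'
      exact hS v (hTS hv) (this ▸ hv')
  have hsub : S ∪ S.image σ ∪ T.image (σ ∘ σ) ⊆ Z := by
    refine union_subset (union_subset hSZ ?_) ?_ <;> intro _ hw <;>
      obtain ⟨v, hv, rfl⟩ := mem_image.mp hw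
    · exact hmaps (hSZ hv)
    · exact hmaps (hmaps (hSZ (hTS hv)))
  have := card_le_card hsub
  rw [card_union_of_disjoint hdisj₂, card_union_of_disjoint hdisj₁, card_image_of_injOn hinjS,
    card_image_of_injOn hinj2] at this
  omega

theorem exists_mem_sdiff_iterate_two_notMem_union
    (hcyc : ∀ v ∈ Z, ∀ w ∈ Z, ∃ k, σ^[k] v = w) {A B : Finset α} (hA : A ⊆ Z) (hB : B ⊆ Z)
    (hBne : B.Nonempty) (hsucc : ∀ v ∈ A ∪ B, σ v ∉ A ∪ B) (hAB : ∀ v ∈ A, σ (σ v) ∉ B)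
    (hD : (A \ B).Nonempty) : ∃ v ∈ A \ B, σ (σ v) ∉ A ∪ B := by
  obtain ⟨w, hw⟩ := hBne
  obtain ⟨v, hv, hv₂⟩ := exists_iterate_two_notMem hcyc (sdiff_subset.trans hA) hD (hB hw)
    (fun h => (mem_sdiff.1 h).2 hw)
    (fun v hv h => hsucc v (mem_union_left _ (mem_sdiff.1 hv).1) (h ▸ mem_union_right _ hw))
  have hvA := (mem_sdiff.1 hv).1
  refine ⟨v, hv, fun h => ?_⟩
  rcases mem_union.1 h with h | h
  · exact hv₂ (mem_sdiff.2 ⟨h, hAB v hvA⟩)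
  · exact hAB v hvA h

theorem three_mul_min_card_add_one_le (hmaps : Set.MapsTo σ Z Z) (hinj : Set.InjOn σ Z)
    (hcyc : ∀ v ∈ Z, ∀ w ∈ Z, ∃ k, σ^[k] v = w) {A B : Finset α} (hA : A ⊆ Z) (hB : B ⊆ Z)
    (hAne : A.Nonempty) (hBne : B.Nonempty) (hne : A ≠ B)
    (hsucc : ∀ v ∈ A ∪ B, σ v ∉ A ∪ B)
    (hAB : ∀ v ∈ A, σ (σ v) ∉ B) (hBA : ∀ v ∈ B, σ (σ v) ∉ A) :
    3 * (min #A #B + 1) ≤ #Z := by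
  set S := A ∪ B
  set T := {v ∈ S | σ (σ v) ∉ S}
  have hcount : 2 * #S + #T ≤ #Z :=
    two_mul_card_add_card_filter_le hmaps hinj (union_subset hA hB) hsucc
  have hAB_T : A ∩ B ⊆ T := fun v hv => by
    obtain ⟨hvA, hvB⟩ := mem_inter.1 hv
    refine mem_filter.2 ⟨mem_union_left _ hvA, fun h => ?_⟩
    rcases mem_union.1 h with h | h
    · exact hBA v hvB h
    · exact hAB v hvA h
  have hD : #(A \ B) = 0 ∨ 1 ≤ #((A \ B) ∩ T) := by
    refine (A \ B).eq_empty_or_nonempty.imp card_eq_zero.2 fun h => ?_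
    obtain ⟨v, hv, hv₂⟩ := exists_mem_sdiff_iterate_two_notMem_union hcyc hA hB hBne hsucc hAB h
    exact card_pos.2 ⟨v, mem_inter.2 ⟨hv, mem_filter.2 ⟨mem_union_left _ (mem_sdiff.1 hv).1, hv₂⟩⟩⟩
  have hE : #(B \ A) = 0 ∨ 1 ≤ #((B \ A) ∩ T) := by
    refine (B \ A).eq_empty_or_nonempty.imp card_eq_zero.2 fun h => ?_
    obtain ⟨v, hv, hv₂⟩ := exists_mem_sdiff_iterate_two_notMem_union hcyc hB hA hAne
      (by simpa only [union_comm B A] using hsucc) hBA h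
    rw [union_comm] at hv₂
    exact card_pos.2 ⟨v, mem_inter.2 ⟨hv, mem_filter.2 ⟨mem_union_right _ (mem_sdiff.1 hv).1, hv₂⟩⟩⟩
  have hDE : 1 ≤ #(A \ B) + #(B \ A) := by
    by_contra! h
    exact hne (Subset.antisymm (sdiff_eq_empty_iff_subset.1 (card_eq_zero.1 (by omega)))
      (sdiff_eq_empty_iff_subset.1 (card_eq_zero.1 (by omega))))
  have hT : #(A ∩ B) + #((A \ B) ∩ T) + #((B \ A) ∩ T) ≤ #T := by
    rw [← card_union_of_disjoint, ← card_union_of_disjoint]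
    · exact card_le_card (union_subset (union_subset hAB_T inter_subset_right) inter_subset_right)
    · simp only [Finset.disjoint_left, mem_union, mem_inter, mem_sdiff]; tauto
    · simp only [Finset.disjoint_left, mem_inter, mem_sdiff]; tauto
  have hA' := card_sdiff_add_card_inter A B
  have hB' := card_sdiff_add_card_inter B A
  have hS : #S + #(A ∩ B) = #A + #B := card_union_add_card_inter A B
  rw [inter_comm B A] at hB'
  omega

end Finset

namespace SimpleGraph.Walk

variable {V : Type*} [DecidableEq V] {G : SimpleGraph V} {u v : V} {c : G.Walk u u}

def cycleSucc (c : G.Walk u u) (v : V) : V :=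
  if h : v ∈ c.support then (c.rotate v h).snd else v

theorem IsCycle.exists_dart_cycleSucc (hc : c.IsCycle) (hv : v ∈ c.support) :
    ∃ d ∈ c.darts, d.fst = v ∧ d.snd = c.cycleSucc v := by
  have hnil : ¬ (c.rotate v hv).Nil := by simpa using hc.not_nil
  refine ⟨(c.rotate v hv).firstDart hnil,
    (rotate_darts c v hv).mem_iff.1 (firstDart_mem_darts hnil), rfl, ?_⟩
  simp [cycleSucc, hv]

theorem IsCycle.cycleSucc_fst (hc : c.IsCycle) {d : G.Dart} (hd : d ∈ c.darts) :
    c.cycleSucc d.fst = d.snd := by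
  obtain ⟨d', hd', hfst, hsnd⟩ := hc.exists_dart_cycleSucc (c.dart_fst_mem_support_of_mem_darts hd)
  have hnodup : (c.darts.map (·.fst)).Nodup := by
    rw [map_fst_darts]; exact hc.nodup_dropLast_support
  rw [← hsnd, List.inj_on_of_nodup_map hnodup hd' hd hfst]

theorem IsCycle.iterate_cycleSucc (hc : c.IsCycle) (hv : v ∈ c.support) {k : ℕ}
    (hk : k ≤ c.length) : c.cycleSucc^[k] v = (c.rotate v hv).getVert k := by
  induction k with
  | zero => simp
  | succ k ih =>
    have hlen : k < (c.rotate v hv).darts.length := by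
      rw [length_darts, length_rotate]; omega
    have hd := (rotate_darts c v hv).mem_iff.1 (List.getElem_mem hlen)
    have := hc.cycleSucc_fst hd
    rw [darts_getElem_eq_getVert] at this
    rw [Function.iterate_succ_apply', ih (by omega), this]

theorem IsCycle.mapsTo_cycleSucc (hc : c.IsCycle) :
    Set.MapsTo c.cycleSucc c.support.toFinset c.support.toFinset := fun v hv => by
  simp only [Finset.mem_coe, List.mem_toFinset] at hv ⊢
  obtain ⟨d, hd, -, hsnd⟩ := hc.exists_dart_cycleSucc hv
  exact hsnd ▸ c.dart_snd_mem_support_of_mem_darts hd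

theorem IsCycle.injOn_cycleSucc (hc : c.IsCycle) :
    Set.InjOn c.cycleSucc c.support.toFinset := fun v hv w hw h => by
  simp only [Finset.mem_coe, List.mem_toFinset] at hv hw
  obtain ⟨d, hd, rfl, hsnd⟩ := hc.exists_dart_cycleSucc hv
  obtain ⟨d', hd', rfl, hsnd'⟩ := hc.exists_dart_cycleSucc hw
  have hnodup : (c.darts.map (·.snd)).Nodup := by rw [map_snd_darts]; exact hc.support_nodup
  rw [List.inj_on_of_nodup_map hnodup hd hd' (hsnd.trans (h.trans hsnd'.symm))]

theorem IsCycle.exists_iterate_cycleSucc_eq (hc : c.IsCycle) :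
    ∀ v ∈ c.support.toFinset, ∀ w ∈ c.support.toFinset, ∃ k, c.cycleSucc^[k] v = w := by
  intro v hv w hw
  rw [List.mem_toFinset] at hv hw
  obtain ⟨k, rfl, hk⟩ :=
    mem_support_iff_exists_getVert.1 ((mem_support_rotate_iff c v hv).2 hw)
  exact ⟨k, hc.iterate_cycleSucc hv (by simpa using hk)⟩

theorem IsCycle.card_support_toFinset (hc : c.IsCycle) : c.support.toFinset.card = c.length := by
  rw [← cons_tail_support, List.toFinset_cons,
    Finset.insert_eq_of_mem (List.mem_toFinset.2 (end_mem_tail_support hc.not_nil)),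
    List.toFinset_card_of_nodup hc.support_nodup, List.length_tail, length_support,
    Nat.add_sub_cancel]

end SimpleGraph.Walk

namespace Paper

variable {V : Type*} {G : SimpleGraph V} {u x y : V} {c : G.Walk u u}

open Walk

/-- Replacing the arc of `c` from `v` to `w = c.cycleSucc^[m] v` by the detour `v a ⋯ b w` gives a
cycle, so the detour is no longer than the arc. -/
theorem IsLongestCycle.length_detour_le [DecidableEq V] (hc : IsLongestCycle c) {v a b : V}
    (hv : v ∈ c.support) {m : ℕ} (hm : 0 < m) (hmc : m < c.length) {Q : G.Walk a b}
    (hQ : Q.IsPath) (hQc : AvoidsCycle c Q) (hva : G.Adj v a)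
    (hbw : G.Adj b (c.cycleSucc^[m] v)) : Q.length + 2 ≤ m := by
  rw [hc.1.iterate_cycleSucc hv hmc.le] at hbw
  set D := (c.rotate v hv).drop m
  have hD : D.IsPath := (hc.1.rotate hv).isPath_drop hm
  have hDc : ∀ z ∈ D.support, z ∈ c.support := fun z hz => by
    rw [drop_support_eq_support_drop_min] at hz
    exact (mem_support_rotate_iff c v hv).1 (List.mem_of_mem_drop hz)
  set p := Q.append (cons hbw D)
  have hp : p.IsPath := by
    rw [isPath_def, support_append, support_cons, List.tail_cons, List.nodup_append]
    exact ⟨hQ.support_nodup, hD.support_nodup, fun z hz z' hz' h => hQc z hz (h ▸ hDc z' hz')⟩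
  have hplen : p.length = Q.length + 1 + (c.length - m) := by
    simp only [length_append, length_cons, drop_length, length_rotate, p, D]; omega
  have hcyc : (cons hva p).IsCycle := by
    refine (cons_isCycle_iff p hva).2 ⟨hp, fun he => ?_⟩
    have := hp.length_eq_one_of_mem_edges (Sym2.eq_swap ▸ he)
    omega
  have := hc.2 v _ hcyc
  rw [length_cons] at this
  omega

theorem IsLongestCycle.not_adj_cycleSucc [DecidableEq V] (hc : IsLongestCycle c)
    {v : V} (hx : x ∉ c.support) (hv : v ∈ c.support) (hxv : G.Adj x v) :
    ¬ G.Adj x (c.cycleSucc v) := fun h => by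
  have := hc.length_detour_le (Q := nil) hv one_pos (by linarith [hc.1.three_le_length])
    IsPath.nil (by simpa [AvoidsCycle] using hx) hxv.symm h
  simp at this

theorem IsLongestCycle.not_adj_iterate_cycleSucc [DecidableEq V] (hc : IsLongestCycle c)
    (hxy : G.Adj x y) (hx : x ∉ c.support) (hy : y ∉ c.support) {v : V} (hv : v ∈ c.support)
    (hxv : G.Adj x v) {m : ℕ} (hm : 0 < m) (hm₂ : m ≤ 2) :
    ¬ G.Adj y (c.cycleSucc^[m] v) := fun h => by
  have hQc : AvoidsCycle c hxy.toWalk := by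
    simp only [AvoidsCycle, Adj.toWalk, support_cons, support_nil, List.mem_cons,
      List.not_mem_nil, or_false]
    rintro _ (rfl | rfl) <;> assumption
  have := hc.length_detour_le hv hm (by linarith [hc.1.three_le_length]) hxy.isPath_toWalk
    hQc hxv.symm h
  simp only [length_cons, length_nil] at this
  omega

section NC

variable [Fintype V] [DecidableEq V] [DecidableRel G.Adj]

theorem mem_NC {v : V} : v ∈ NC G c x ↔ G.Adj x v ∧ v ∈ c.support := by
  simp [NC]

theorem NC_subset_support_toFinset : NC G c x ⊆ c.support.toFinset := fun _ hv =>
  List.mem_toFinset.2 (mem_NC.1 hv).2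

theorem IsLongestCycle.cycleSucc_notMem_NC_union (hc : IsLongestCycle c) (hxy : G.Adj x y)
    (hx : x ∉ c.support) (hy : y ∉ c.support) {v : V} (hv : v ∈ NC G c x) :
    c.cycleSucc v ∉ NC G c x ∪ NC G c y := by
  obtain ⟨hxv, hvc⟩ := mem_NC.1 hv
  simp only [mem_union, mem_NC, not_or, not_and]
  exact ⟨fun h _ => hc.not_adj_cycleSucc hx hvc hxv h,
    fun h _ => hc.not_adj_iterate_cycleSucc hxy hx hy hvc hxv one_pos one_le_two h⟩

theorem IsLongestCycle.cycleSucc_cycleSucc_notMem_NC (hc : IsLongestCycle c) (hxy : G.Adj x y)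
    (hx : x ∉ c.support) (hy : y ∉ c.support) {v : V} (hv : v ∈ NC G c x) :
    c.cycleSucc (c.cycleSucc v) ∉ NC G c y := fun h => by
  obtain ⟨hxv, hvc⟩ := mem_NC.1 hv
  exact hc.not_adj_iterate_cycleSucc hxy hx hy hvc hxv two_pos le_rfl (mem_NC.1 h).1

theorem degree_le_card_NC_add_one (hxy : G.Adj x y) (hx : x ∉ c.support) (hy : y ∉ c.support)
    (hshort : ∀ (a b : V) (q : G.Walk a b), q.IsPath → AvoidsCycle c q → q.length ≤ 1) :
    G.degree x ≤ #(NC G c x) + 1 := by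
  have hsub : G.neighborFinset x ⊆ insert y (NC G c x) := fun z hz => by
    rw [mem_neighborFinset] at hz
    rw [mem_insert, mem_NC]
    by_contra! h
    have hzc : z ∉ c.support := h.2 hz
    have hQ : (cons hz.symm hxy.toWalk).IsPath := by
      simp [hz.ne', h.1, hxy.ne]
    have hQc : AvoidsCycle c (cons hz.symm hxy.toWalk) := by
      simp only [AvoidsCycle, Adj.toWalk, support_cons, support_nil, List.mem_cons,
        List.not_mem_nil, or_false]
      rintro _ (rfl | rfl | rfl) <;> assumption
    simpa using hshort _ _ _ hQ hQc
  calc G.degree x = #(G.neighborFinset x) := (card_neighborFinset_eq_degree G x).symm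
    _ ≤ #(insert y (NC G c x)) := card_le_card hsub
    _ ≤ #(NC G c x) + 1 := card_insert_le _ _

end NC

theorem stmt_0 [Fintype V] [DecidableEq V] (G : SimpleGraph V) [DecidableRel G.Adj]
    {u x y : V} (c : G.Walk u u) (P : G.Walk x y)
    (hc : IsLongestCycle c) (hP : IsLongestPathOutside c P)
    (hp : P.length = 1)
    (hx : 2 ≤ (NC G c x).card) (hy : 2 ≤ (NC G c y).card)
    (hne : NC G c x ≠ NC G c y) :
    3 * G.minDegree ≤ c.length := by
  obtain ⟨-, hPc, hPmax⟩ := hP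
  have hxy : G.Adj x y := adj_of_length_eq_one hp
  have hxc : x ∉ c.support := hPc x P.start_mem_support
  have hyc : y ∉ c.support := hPc y P.end_mem_support
  have hshort : ∀ (a b : V) (q : G.Walk a b), q.IsPath → AvoidsCycle c q → q.length ≤ 1 :=
    hp ▸ hPmax
  have hsucc : ∀ v ∈ NC G c x ∪ NC G c y, c.cycleSucc v ∉ NC G c x ∪ NC G c y := by
    intro v hv
    rcases mem_union.1 hv with hv | hv
    · exact hc.cycleSucc_notMem_NC_union hxy hxc hyc hv
    · rw [union_comm]; exact hc.cycleSucc_notMem_NC_union hxy.symm hyc hxc hv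
  have hcount := three_mul_min_card_add_one_le hc.1.mapsTo_cycleSucc hc.1.injOn_cycleSucc
    hc.1.exists_iterate_cycleSucc_eq NC_subset_support_toFinset NC_subset_support_toFinset
    (card_pos.1 (by omega)) (card_pos.1 (by omega)) hne hsucc
    (fun _ hv => hc.cycleSucc_cycleSucc_notMem_NC hxy hxc hyc hv)
    (fun _ hv => hc.cycleSucc_cycleSucc_notMem_NC hxy.symm hyc hxc hv)
  rw [hc.1.card_support_toFinset] at hcount
  have hdx := degree_le_card_NC_add_one hxy hxc hyc hshort
  have hdy := degree_le_card_NC_add_one hxy.symm hyc hxc hshort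
  have := G.minDegree_le_degree x
  have := G.minDegree_le_degree y
  omega

end Paper
end

section
/- Let G be a finite simple graph, C a longest cycle in G, and P a longest path in G \ C with endpoints x and y and length p ≥ 1. Suppose |N_C(x)| ≥ 2, |N_C(y)| ≥ 2 and N_C(x) ≠ N_C(y). If p = 1, then |C| ≥ 3δ(G) + max{σ₁, σ₂} − 1, where σ₁ = |N_C(x) \ N_C(y)| and σ₂ = |N_C(y) \ N_C(x)|. -/
open SimpleGraph Finset

namespace Paper

variable {V : Type*}

/-!
Index the longest cycle `C` by `ZMod |C|`. If two vertices of `C` at cyclic distance `t` are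
joined through `G - V(C)` by a path of length `ℓ`, replacing the arc between them gives a cycle of
length `|C| - t + ℓ + 2`, so `ℓ + 2 ≤ t`. With `p = 1` this says: no two attachment vertices of
`x` or `y` are consecutive on `C`, and no attachment vertex of `x` lies two steps before one of
`y` or vice versa. Hence each attachment vertex is followed by a free vertex, and a common
attachment vertex by two. Two free vertices also follow some vertex of `N_C(x) \ N_C(y)` when
this set is nonempty: otherwise stepping by `2` from it would stay inside it and, by parity,
reach `N_C(y)` or a vertex just before it; symmetrically for `N_C(y) \ N_C(x)`. Counting gives
`|C| ≥ 2|N_C(x) ∪ N_C(y)| + |N_C(x) ∩ N_C(y)| + [σ₁ > 0] + [σ₂ > 0]`, while maximality of `P`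
gives `δ ≤ |N_C(x)| + 1` and `δ ≤ |N_C(y)| + 1`.
-/

section CyclicGaps

variable {n : ℕ} [NeZero n]

theorem two_mul_card_add_card_filter_le {S : Finset (ZMod n)} (hS : ∀ i ∈ S, i + 1 ∉ S) :
    2 * #S + #{i ∈ S | i + 2 ∉ S} ≤ n := by
  set E := {i ∈ S | i + 2 ∉ S}
  have hS1 : Disjoint S (S.image (· + 1)) := by
    simp only [Finset.disjoint_right, mem_image]
    rintro _ ⟨i, hi, rfl⟩
    exact hS i hi
  have hS2 : Disjoint (S ∪ S.image (· + 1)) (E.image (· + 2)) := by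
    simp only [Finset.disjoint_right, mem_image, mem_union]
    rintro _ ⟨i, hi, rfl⟩ (h | ⟨j, hj, hji⟩)
    · exact (mem_filter.mp hi).2 h
    · obtain rfl : j = i + 1 := by linear_combination hji
      exact hS i (mem_filter.mp hi).1 hj
  calc 2 * #S + #E = #(S ∪ S.image (· + 1) ∪ E.image (· + 2)) := by
        rw [card_union_of_disjoint hS2, card_union_of_disjoint hS1,
          card_image_of_injective _ (add_left_injective 1),
          card_image_of_injective _ (add_left_injective 2)]
        ring
    _ ≤ n := by simpa using card_le_univ (S ∪ S.image (· + 1) ∪ E.image (· + 2))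

theorem exists_mem_sdiff_add_two_notMem {X Y : Finset (ZMod n)}
    (h1 : ∀ i ∈ X ∪ Y, i + 1 ∉ X ∪ Y) (hXY : ∀ i ∈ X, i + 2 ∉ Y)
    (hX : (X \ Y).Nonempty) (hY : Y.Nonempty) : ∃ i ∈ X \ Y, i + 2 ∉ X ∪ Y := by
  by_contra! hclosed
  obtain ⟨a, ha⟩ := hX
  obtain ⟨b, hb⟩ := hY
  have step : ∀ i ∈ X \ Y, i + 2 ∈ X \ Y := fun i hi =>
    have hi2 := hclosed i hi
    mem_sdiff.mpr ⟨(mem_union.mp hi2).resolve_right (hXY i (mem_sdiff.mp hi).1),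
      hXY i (mem_sdiff.mp hi).1⟩
  have orbit : ∀ k : ℕ, a + 2 * k ∈ X \ Y := by
    intro k
    induction k with
    | zero => simpa using ha
    | succ k ih => simpa [mul_add, ← add_assoc] using step _ ih
  have hba : b = a + (b - a).val := by rw [ZMod.natCast_zmod_val]; ring
  obtain ⟨k, hk | hk⟩ := Nat.even_or_odd' (b - a).val
  · rw [hba, hk] at hb
    exact (mem_sdiff.mp (by exact_mod_cast orbit k)).2 hb
  · refine h1 (a + 2 * k) (mem_union_left _ (mem_sdiff.mp (orbit k)).1) ?_
    rw [hba, hk] at hb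
    exact mem_union_right _ (by push_cast at hb; rwa [← add_assoc] at hb)

theorem card_le_of_cyclic_gaps {X Y : Finset (ZMod n)}
    (h1 : ∀ i ∈ X ∪ Y, i + 1 ∉ X ∪ Y) (hXY : ∀ i ∈ X, i + 2 ∉ Y) (hYX : ∀ i ∈ Y, i + 2 ∉ X)
    (hX : X.Nonempty) (hY : Y.Nonempty) :
    2 * #(X ∪ Y) + #(X ∩ Y) + (if (X \ Y).Nonempty then 1 else 0)
      + (if (Y \ X).Nonempty then 1 else 0) ≤ n := by
  set E := {i ∈ X ∪ Y | i + 2 ∉ X ∪ Y}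
  have hinter : X ∩ Y ⊆ E := by
    intro i hi
    obtain ⟨hiX, hiY⟩ := mem_inter.mp hi
    refine mem_filter.mpr ⟨mem_union_left _ hiX, ?_⟩
    rw [mem_union, not_or]
    exact ⟨hYX i hiY, hXY i hiX⟩
  have hsplit : #(X ∩ Y) + #(E ∩ (X \ Y)) + #(E ∩ (Y \ X)) ≤ #E := by
    rw [← card_union_of_disjoint, ← card_union_of_disjoint]
    · exact card_le_card (union_subset (union_subset hinter inter_subset_left) inter_subset_left)
    all_goals
      rw [Finset.disjoint_left]
      intro i
      simp only [mem_union, mem_inter, mem_sdiff]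
      tauto
  have hXY' : (X \ Y).Nonempty → (E ∩ (X \ Y)).Nonempty := fun h =>
    have ⟨i, hi, hi2⟩ := exists_mem_sdiff_add_two_notMem h1 hXY h hY
    ⟨i, mem_inter.mpr ⟨mem_filter.mpr ⟨mem_union_left _ (mem_sdiff.mp hi).1, hi2⟩, hi⟩⟩
  have hYX' : (Y \ X).Nonempty → (E ∩ (Y \ X)).Nonempty := fun h =>
    have ⟨i, hi, hi2⟩ := exists_mem_sdiff_add_two_notMem (by rwa [union_comm]) hYX h hX
    ⟨i, mem_inter.mpr ⟨mem_filter.mpr ⟨mem_union_right _ (mem_sdiff.mp hi).1, by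
      rwa [union_comm]⟩, hi⟩⟩
  have hcard : 2 * #(X ∪ Y) + #E ≤ n := two_mul_card_add_card_filter_le h1
  split_ifs with hA hB hB
  · have := (hXY' hA).card_pos; have := (hYX' hB).card_pos; omega
  · have := (hXY' hA).card_pos; omega
  · have := (hYX' hB).card_pos; omega
  · omega

end CyclicGaps

section Arc

variable {G : SimpleGraph V} {n : ℕ} (f : ZMod n → V) (hf : ∀ i, G.Adj (f i) (f (i + 1)))

def cyclicArc : (i : ZMod n) → (k : ℕ) → G.Walk (f i) (f (i + k))
  | _, 0 => Walk.nil.copy rfl (by simp)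
  | i, k + 1 => (Walk.cons (hf i) (cyclicArc (i + 1) k)).copy rfl (by push_cast; ring_nf)

@[simp]
theorem length_cyclicArc (i : ZMod n) (k : ℕ) : (cyclicArc f hf i k).length = k := by
  induction k generalizing i with
  | zero => simp [cyclicArc]
  | succ k ih => simp [cyclicArc, ih]

theorem support_cyclicArc (i : ZMod n) (k : ℕ) :
    (cyclicArc f hf i k).support = (List.range (k + 1)).map fun s : ℕ => f (i + s) := by
  induction k generalizing i with
  | zero => simp [cyclicArc]
  | succ k ih =>
    rw [cyclicArc, Walk.support_copy, Walk.support_cons, ih, List.range_succ_eq_map (n := k + 1),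
      List.map_cons, List.map_map]
    congr 1
    · simp
    · refine List.map_congr_left fun s _ => ?_
      simp only [Function.comp_apply, Nat.cast_succ]
      ring_nf

theorem isPath_cyclicArc (hinj : Function.Injective f) (i : ZMod n) {k : ℕ} (hk : k < n) :
    (cyclicArc f hf i k).IsPath := by
  rw [Walk.isPath_def, support_cyclicArc]
  refine List.Nodup.map_on (fun s hs t ht hst => ?_) List.nodup_range
  rw [List.mem_range] at hs ht
  have := congrArg ZMod.val (add_left_cancel (hinj hst))
  rwa [ZMod.val_cast_of_lt (by omega), ZMod.val_cast_of_lt (by omega)] at this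

end Arc

section CycleVert

variable {G : SimpleGraph V} {u : V}

def cycleVert (c : G.Walk u u) (i : ZMod c.length) : V := c.getVert i.val

variable {c : G.Walk u u}

theorem cycleVert_natCast {k : ℕ} (hk : k ≤ c.length) : cycleVert c k = c.getVert k := by
  rw [cycleVert, ZMod.val_natCast]
  rcases hk.lt_or_eq with hk | rfl
  · rw [Nat.mod_eq_of_lt hk]
  · rw [Nat.mod_self, Walk.getVert_zero, Walk.getVert_length]

theorem cycleVert_mem_support (i : ZMod c.length) : cycleVert c i ∈ c.support :=
  c.getVert_mem_support _

theorem exists_cycleVert_eq {v : V} (hv : v ∈ c.support) : ∃ i, cycleVert c i = v := by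
  obtain ⟨k, rfl, hk⟩ := Walk.mem_support_iff_exists_getVert.mp hv
  exact ⟨k, cycleVert_natCast hk⟩

theorem adj_cycleVert_add_one (hc : 0 < c.length) (i : ZMod c.length) :
    G.Adj (cycleVert c i) (cycleVert c (i + 1)) := by
  have : NeZero c.length := ⟨hc.ne'⟩
  have hi := i.val_lt
  rw [← ZMod.natCast_zmod_val i, ← Nat.cast_succ, cycleVert_natCast hi.le, cycleVert_natCast hi]
  exact c.adj_getVert_succ hi

theorem cycleVert_injective (hc : c.IsCycle) : Function.Injective (cycleVert c) := by
  have : NeZero c.length := ⟨by have := hc.three_le_length; omega⟩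
  intro i j hij
  have hi := i.val_lt
  have hj := j.val_lt
  exact ZMod.val_injective _ <| hc.getVert_injOn'
    (show i.val ≤ c.length - 1 by omega) (show j.val ≤ c.length - 1 by omega) hij

theorem exists_isPath_cycleVert_add (hc : c.IsCycle) (i : ZMod c.length) {t : ℕ} (ht : 0 < t)
    (htn : t < c.length) :
    ∃ R : G.Walk (cycleVert c (i + t)) (cycleVert c i),
      R.IsPath ∧ R.length = c.length - t ∧ ∀ v ∈ R.support, v ∈ c.support := by
  have : NeZero c.length := ⟨by omega⟩
  have hback : i + t + ((c.length - t : ℕ) : ZMod c.length) = i := by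
    rw [Nat.cast_sub htn.le, ZMod.natCast_self]; ring
  have hf := adj_cycleVert_add_one (by omega : 0 < c.length)
  refine ⟨(cyclicArc _ hf (i + t) (c.length - t)).copy rfl (congrArg _ hback),
    (Walk.isPath_copy _ _ _).mpr (isPath_cyclicArc _ hf (cycleVert_injective hc) _ (by omega)),
    by simp, ?_⟩
  simp only [Walk.support_copy, support_cyclicArc, List.mem_map]
  rintro _ ⟨s, -, rfl⟩
  exact cycleVert_mem_support _

end CycleVert

theorem IsLongestCycle.length_add_two_le {G : SimpleGraph V} {u : V} {c : G.Walk u u}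
    (hc : IsLongestCycle c) (i : ZMod c.length) {t : ℕ} (ht : 0 < t) (htn : t < c.length)
    {z w : V} (Q : G.Walk z w) (hQ : Q.IsPath) (hQc : AvoidsCycle c Q)
    (hz : G.Adj (cycleVert c i) z) (hw : G.Adj w (cycleVert c (i + t))) :
    Q.length + 2 ≤ t := by
  obtain ⟨R, hR, hRlen, hRc⟩ := exists_isPath_cycleVert_add hc.1 i ht htn
  have hinj := cycleVert_injective hc.1
  have hit : cycleVert c i ≠ cycleVert c (i + t) := by
    intro h
    have := congrArg ZMod.val (add_eq_left.mp (hinj h).symm)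
    rw [ZMod.val_natCast, Nat.mod_eq_of_lt htn, ZMod.val_zero] at this
    omega
  let D := Walk.cons hz (Q.concat hw)
  have hD : D.IsPath := by
    refine (hQ.concat ?_ hw).cons ?_
    · exact fun h => hQc _ h (cycleVert_mem_support _)
    · rw [Walk.support_concat, List.mem_append, List.mem_singleton, not_or]
      exact ⟨fun h => hQc _ h (cycleVert_mem_support _), hit⟩
  -- `R.append D` is `C` with its arc from `i` to `i + t` replaced by the detour through `Q`
  have hcyc : (R.append D).IsCycle := by
    refine hR.isCycle_append hD ?_ (Or.inr (by simp [D]))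
    rw [Walk.support_cons, List.tail_cons, Walk.support_concat]
    intro v hvR hvD
    rw [List.mem_append, List.mem_singleton] at hvD
    rcases hvD with hvQ | rfl
    · exact hQc v hvQ (hRc v (List.mem_of_mem_tail hvR))
    · have hnodup := hR.support_nodup
      rw [← R.cons_tail_support, List.nodup_cons] at hnodup
      exact hnodup.1 hvR
  have := hc.2 _ _ hcyc
  simp only [Walk.length_append, hRlen, D, Walk.length_cons, Walk.length_concat] at this
  omega

section LongestPath

variable {G : SimpleGraph V} {u x y : V} {c : G.Walk u u} {P : G.Walk x y}

theorem AvoidsCycle.reverse (hPc : AvoidsCycle c P) : AvoidsCycle c P.reverse :=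
  fun v hv => hPc v (by rwa [Walk.support_reverse, List.mem_reverse] at hv)

theorem IsLongestPathOutside.reverse (hP : IsLongestPathOutside c P) :
    IsLongestPathOutside c P.reverse :=
  ⟨hP.1.reverse, hP.2.1.reverse, fun a b q hq hqc => P.length_reverse ▸ hP.2.2 a b q hq hqc⟩

theorem AvoidsCycle.exists_isPath (hPc : AvoidsCycle c P) {z w : V} (hz : z ∈ P.support)
    (hw : w ∈ P.support) : ∃ Q : G.Walk z w, Q.IsPath ∧ AvoidsCycle c Q := by
  classical
  refine ⟨((P.takeUntil z hz).reverse.append (P.takeUntil w hw)).bypass, Walk.bypass_isPath _,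
    fun v hv => hPc v ?_⟩
  replace hv := Walk.support_bypass_subset_support _ hv
  rw [Walk.mem_support_append_iff, Walk.support_reverse, List.mem_reverse] at hv
  rcases hv with hv | hv
  exacts [P.support_takeUntil_subset_support hz hv, P.support_takeUntil_subset_support hw hv]

variable [Fintype V] [DecidableEq V] [DecidableRel G.Adj]

theorem IsLongestPathOutside.degree_le (hP : IsLongestPathOutside c P) :
    G.degree x ≤ #(NC G c x) + P.length := by
  have hN : G.neighborFinset x ⊆ NC G c x ∪ P.support.toFinset.erase x := by
    intro w hw
    have hxw := (mem_neighborFinset _ _ _).mp hw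
    by_cases hwc : w ∈ c.support
    · exact mem_union_left _ (mem_filter.mpr ⟨hw, hwc⟩)
    refine mem_union_right _ (mem_erase.mpr ⟨hxw.ne', List.mem_toFinset.mpr ?_⟩)
    by_contra hwP
    have hlong := hP.2.2 _ _ (Walk.cons hxw.symm P) (hP.1.cons hwP) (by
      rintro v hv
      rcases List.mem_cons.mp (Walk.support_cons _ _ ▸ hv) with rfl | hv
      exacts [hwc, hP.2.1 v hv])
    simp at hlong
  calc G.degree x = #(G.neighborFinset x) := (card_neighborFinset_eq_degree _ _).symm
    _ ≤ #(NC G c x) + #(P.support.toFinset.erase x) := (card_le_card hN).trans (card_union_le _ _)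
    _ = #(NC G c x) + P.length := by
      rw [card_erase_of_mem (List.mem_toFinset.mpr P.start_mem_support),
        List.toFinset_card_of_nodup hP.1.support_nodup, Walk.length_support, Nat.add_sub_cancel]

theorem NC_eq_image [NeZero c.length] (x : V) :
    NC G c x = Finset.image (cycleVert c) {i | G.Adj x (cycleVert c i)} := by
  ext v
  simp only [NC, mem_filter, mem_neighborFinset, mem_image, mem_univ, true_and]
  constructor
  · rintro ⟨hxv, hv⟩
    obtain ⟨i, rfl⟩ := exists_cycleVert_eq hv
    exact ⟨i, hxv, rfl⟩
  · rintro ⟨i, hxi, rfl⟩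
    exact ⟨hxi, cycleVert_mem_support i⟩

theorem IsLongestCycle.card_NC_le (hc : IsLongestCycle c) (hP : P.IsPath)
    (hPc : AvoidsCycle c P) (hp : 0 < P.length) (hx : (NC G c x).Nonempty)
    (hy : (NC G c y).Nonempty) :
    2 * #(NC G c x ∪ NC G c y) + #(NC G c x ∩ NC G c y)
      + (if (NC G c x \ NC G c y).Nonempty then 1 else 0)
      + (if (NC G c y \ NC G c x).Nonempty then 1 else 0) ≤ c.length := by
  have hn : 2 < c.length := hc.1.three_le_length
  have : NeZero c.length := ⟨by omega⟩
  have hinj := cycleVert_injective hc.1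
  simp only [NC_eq_image] at hx hy ⊢
  set X : Finset (ZMod c.length) := {i | G.Adj x (cycleVert c i)}
  set Y : Finset (ZMod c.length) := {i | G.Adj y (cycleVert c i)}
  rw [← image_union, ← image_inter _ _ hinj, ← image_sdiff _ _ hinj, ← image_sdiff _ _ hinj,
    card_image_of_injective _ hinj, card_image_of_injective _ hinj]
  simp only [image_nonempty] at hx hy ⊢
  have hend : ∀ i ∈ X ∪ Y, ∃ z ∈ P.support, G.Adj (cycleVert c i) z := by
    intro i hi
    simp only [X, Y, mem_union, mem_filter, mem_univ, true_and] at hi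
    rcases hi with h | h
    exacts [⟨x, P.start_mem_support, h.symm⟩, ⟨y, P.end_mem_support, h.symm⟩]
  refine card_le_of_cyclic_gaps (fun i hi hi1 => ?_) (fun i hi hi2 => ?_) (fun i hi hi2 => ?_)
    hx hy
  · obtain ⟨z, hzP, hz⟩ := hend i hi
    obtain ⟨w, hwP, hw⟩ := hend _ hi1
    obtain ⟨Q, hQ, hQc⟩ := hPc.exists_isPath hzP hwP
    have := hc.length_add_two_le i one_pos (by omega) Q hQ hQc hz (by simpa using hw.symm)
    omega
  · simp only [X, Y, mem_filter, mem_univ, true_and] at hi hi2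
    have := hc.length_add_two_le i two_pos hn P hP hPc hi.symm (by simpa using hi2)
    omega
  · simp only [X, Y, mem_filter, mem_univ, true_and] at hi hi2
    have := hc.length_add_two_le i two_pos hn P.reverse hP.reverse hPc.reverse hi.symm
      (by simpa using hi2)
    rw [Walk.length_reverse] at this
    omega

end LongestPath

theorem three_mul_add_max_sub_one_le {α : Type*} [DecidableEq α] {A B : Finset α} (hAB : A ≠ B)
    {d n : ℕ} (hA : d ≤ #A + 1) (hB : d ≤ #B + 1)
    (h : 2 * #(A ∪ B) + #(A ∩ B) + (if (A \ B).Nonempty then 1 else 0)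
      + (if (B \ A).Nonempty then 1 else 0) ≤ n) :
    3 * d + max #(A \ B) #(B \ A) - 1 ≤ n := by
  have hU := card_union_add_card_inter A B
  have hA' := card_sdiff_add_card_inter A B
  have hB' := card_sdiff_add_card_inter B A
  rw [inter_comm B A] at hB'
  have hne : (A \ B).Nonempty ∨ (B \ A).Nonempty := by
    by_contra! h0
    rw [sdiff_eq_empty_iff_subset, sdiff_eq_empty_iff_subset] at h0
    exact hAB (h0.1.antisymm h0.2)
  simp only [← card_pos] at h hne
  split_ifs at h <;> omega

theorem stmt_2 [Fintype V] [DecidableEq V] (G : SimpleGraph V) [DecidableRel G.Adj]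
    {u x y : V} (c : G.Walk u u) (P : G.Walk x y)
    (hc : IsLongestCycle c) (hP : IsLongestPathOutside c P)
    (hp : P.length = 1)
    (hx : 2 ≤ (NC G c x).card) (hy : 2 ≤ (NC G c y).card)
    (hne : NC G c x ≠ NC G c y) :
    3 * G.minDegree +
      max ((NC G c x \ NC G c y).card) ((NC G c y \ NC G c x).card) - 1 ≤ c.length := by
  have hcount := hc.card_NC_le hP.1 hP.2.1 (by omega) (card_pos.mp (by omega))
    (card_pos.mp (by omega))
  have hdx := (G.minDegree_le_degree x).trans hP.degree_le
  have hdy := (G.minDegree_le_degree y).trans hP.reverse.degree_le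
  rw [hp] at hdx
  rw [Walk.length_reverse, hp] at hdy
  exact three_mul_add_max_sub_one_le hne hdx hdy hcount
end Paper
end

section
/- Let G be a finite simple graph, C a longest cycle in G, and P a longest path in G \ C with endpoints x, y and length p ≥ 0. Suppose N_C(x) = N_C(y) and |N_C(x)| ≥ 2. Let I_a and I_b be two distinct elementary segments on C created by N_C(x), and let L be an intermediate path between I_a and I_b (a path from an interior vertex of I_a to an interior vertex of I_b internally disjoint from C ∪ P). Then |I_a| + |I_b| ≥ 2p + 2|L| + 4. -/
/-!
Orient the longest cycle as `a Q₁ z Q₂ b ⋯ a' J₁ w J₂ b' ⋯ a` with `Ia = Q₁ Q₂` and `Ib = J₁ J₂`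
(reversing `Ib` if necessary). Since `N_C(x) = N_C(y)`, both `a x P y a'` and `b x P y b'` are
chords of the cycle, and each of them crosses the chord `L`. Disjoint chords `p₁ ⋯ p₃` and
`p₂ ⋯ p₄` of a cycle `p₁ ⋯ p₂ ⋯ p₃ ⋯ p₄ ⋯ p₁` can replace its arcs `p₁ ⋯ p₂` and `p₃ ⋯ p₄`, so
maximality of the cycle gives `p + 2 + |L| ≤ |Q₁| + |J₁|` and `p + 2 + |L| ≤ |Q₂| + |J₂|`;
adding them yields the claim.
-/

open SimpleGraph Finset

namespace SimpleGraph.Walk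

variable {V : Type*} {G : SimpleGraph V} {u v w x y : V}

theorem IsPath.start_notMem_support_tail {p : G.Walk u v} (hp : p.IsPath) :
    u ∉ p.support.tail := by
  have := hp.support_nodup
  rw [← cons_tail_support] at this
  exact (List.nodup_cons.mp this).1

theorem IsPath.append {p : G.Walk u v} {q : G.Walk v w} (hp : p.IsPath) (hq : q.IsPath)
    (h : ∀ s ∈ p.support, s ∈ q.support → s = v) : (p.append q).IsPath := by
  refine IsPath.mk' ?_
  rw [support_append]
  refine hp.support_nodup.append hq.support_nodup.tail fun s hs hs' ↦ ?_
  exact hq.start_notMem_support_tail (h s hs (List.mem_of_mem_tail hs') ▸ hs')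

theorem IsPath.cons_concat {p : G.Walk x y} (hp : p.IsPath) {h : G.Adj u x} {h' : G.Adj y v}
    (hu : u ∉ p.support) (hv : v ∉ p.support) (huv : u ≠ v) :
    (cons h (p.concat h')).IsPath :=
  (hp.concat hv h').cons (by simp [support_concat, hu, huv])

theorem mem_support_cons_concat {s : V} {h : G.Adj u x} {p : G.Walk x y} {h' : G.Adj y v} :
    s ∈ (cons h (p.concat h')).support ↔ s = u ∨ s ∈ p.support ∨ s = v := by
  simp [support_concat]

theorem IsCycle.append_comm {p : G.Walk u v} {q : G.Walk v u} (h : (p.append q).IsCycle) :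
    (q.append p).IsCycle := by
  rw [isCycle_def, isTrail_def, edges_append, tail_support_append] at h ⊢
  refine ⟨List.perm_append_comm.nodup_iff.mp h.1, fun hnil ↦ h.2.1 ?_,
    List.perm_append_comm.nodup_iff.mp h.2.2⟩
  rw [eq_nil_iff_nil, ← length_eq_zero_iff, length_append, Nat.add_comm, ← length_append, hnil,
    length_nil]

theorem IsCycle.ne_of_append {p : G.Walk u v} {q : G.Walk v u} (h : (p.append q).IsCycle)
    (hp : ¬p.Nil) (hq : ¬q.Nil) : u ≠ v := by
  rintro rfl
  exact hq (isPath_iff_nil.mp (h.isPath_of_append_right hp))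

theorem IsPath.exists_eq_append_of_edges_subset {J : G.Walk u w} {p : G.Walk u v}
    (hJ : J.IsPath) (hp : p.IsPath) (h : J.edges ⊆ p.edges) :
    ∃ E : G.Walk w v, p = J.append E := by
  induction J with
  | nil => exact ⟨p, rfl⟩
  | @cons r t _ hrt J ih =>
    have hJ' := (cons_isPath_iff _ _).mp hJ
    have ht : t = p.snd := hp.eq_snd_of_mem_edges (h (by simp))
    cases p with
    | nil => simpa using h (List.mem_cons_self ..)
    | cons hrs q =>
      obtain rfl : t = _ := ht.trans (snd_cons _ _)
      have hsub : J.edges ⊆ q.edges := fun e he ↦ by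
        rcases List.mem_cons.mp (h (List.mem_cons_of_mem _ he)) with rfl | he'
        · exact absurd (J.fst_mem_support_of_mem_edges he) hJ'.2
        · exact he'
      obtain ⟨E, rfl⟩ := ih hJ'.1 ((cons_isPath_iff _ _).mp hp).1 hsub
      exact ⟨E, rfl⟩

theorem IsPath.exists_eq_append_append_of_edges_subset {p : G.Walk u v} {J : G.Walk w x}
    (hp : p.IsPath) (hJ : J.IsPath) (hJn : ¬J.Nil) (h : J.edges ⊆ p.edges) :
    (∃ (B₁ : G.Walk u w) (B₂ : G.Walk x v), p = B₁.append (J.append B₂)) ∨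
      ∃ (B₁ : G.Walk u x) (B₂ : G.Walk w v), p = B₁.append (J.reverse.append B₂) := by
  classical
  induction p with
  | nil => exact absurd (h (J.edges.head_mem (by simpa using hJn))) (by simp)
  | @cons s t _ hst q ih =>
    by_cases hs : s ∈ J.support
    · by_cases hsw : s = w
      · subst hsw
        obtain ⟨E, hE⟩ := hJ.exists_eq_append_of_edges_subset hp h
        exact .inl ⟨Walk.nil, E, hE⟩
      by_cases hsx : s = x
      · subst hsx
        obtain ⟨E, hE⟩ := hJ.reverse.exists_eq_append_of_edges_subset hp
          (by simpa [List.subset_def] using h)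
        exact .inr ⟨Walk.nil, E, hE⟩
      -- Otherwise `s` is an inner vertex of `J`, so it lies on two edges of `J`,
      -- whereas the start of the path `p` lies on only one edge of `p`.
      exfalso
      have hn₁ : ¬(J.takeUntil s hs).Nil := not_nil_of_ne (Ne.symm hsw)
      have hn₂ : ¬(J.dropUntil s hs).Nil := not_nil_of_ne hsx
      have he₁ := (J.takeUntil s hs).mk_penultimate_end_mem_edges hn₁
      have he₂ := (J.dropUntil s hs).mk_start_snd_mem_edges hn₂
      have heq : (J.takeUntil s hs).penultimate = (J.dropUntil s hs).snd :=
        (hp.eq_snd_of_mem_edges (Sym2.eq_swap ▸ h (J.edges_takeUntil_subset_edges hs he₁))).trans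
          (hp.eq_snd_of_mem_edges (h (J.edges_dropUntil_subset_edges hs he₂))).symm
      exact (J.take_spec hs ▸ hJ).ne_of_mem_support_of_append (adj_snd hn₂).ne'
        (fst_mem_support_of_mem_edges _ he₁) (snd_mem_support_of_mem_edges _ he₂) heq
    · have hsub : J.edges ⊆ q.edges := fun e he ↦ by
        rcases List.mem_cons.mp (h he) with rfl | he'
        · exact absurd (J.fst_mem_support_of_mem_edges he) hs
        · exact he'
      rcases ih ((cons_isPath_iff _ _).mp hp).1 hsub with ⟨B₁, B₂, rfl⟩ | ⟨B₁, B₂, rfl⟩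
      · exact .inl ⟨cons hst B₁, B₂, rfl⟩
      · exact .inr ⟨cons hst B₁, B₂, rfl⟩

theorem IsCycle.exists_eq_append_or_reverse_eq_append {c : G.Walk u u} {I : G.Walk u v}
    (hc : c.IsCycle) (hI : I.IsPath) (hIn : ¬I.Nil) (h : I.edges ⊆ c.edges) :
    ∃ E : G.Walk v u, c = I.append E ∨ c.reverse = I.append E := by
  cases c with
  | nil => exact absurd hc not_isCycle_nil
  | @cons _ t _ hut q =>
    have hq := (cons_isCycle_iff q hut).mp hc
    by_cases ht : s(u, t) ∈ I.edges
    · cases I with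
      | nil => exact absurd nil_nil hIn
      | cons hus I' =>
        obtain rfl : t = _ := (hI.eq_snd_of_mem_edges ht).trans (snd_cons _ _)
        have hI' := (cons_isPath_iff _ _).mp hI
        have hsub : I'.edges ⊆ q.edges := fun e he ↦ by
          rcases List.mem_cons.mp (h (List.mem_cons_of_mem _ he)) with rfl | he'
          · exact absurd (I'.fst_mem_support_of_mem_edges he) hI'.2
          · exact he'
        obtain ⟨E, rfl⟩ := hI'.1.exists_eq_append_of_edges_subset hq.1 hsub
        exact ⟨E, .inl rfl⟩
    · have hsub : I.edges ⊆ q.reverse.edges := fun e he ↦ by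
        rcases List.mem_cons.mp (h he) with rfl | he'
        · exact absurd he ht
        · rwa [edges_reverse, List.mem_reverse]
      obtain ⟨E, hE⟩ := hI.exists_eq_append_of_edges_subset hq.1.reverse hsub
      refine ⟨E.concat hut.symm, .inr ?_⟩
      rw [reverse_cons, hE, concat_eq_append, append_assoc]

theorem isCycle_of_crossing_chords {p₁ p₂ p₃ p₄ : V} {X : G.Walk p₂ p₃} {Y : G.Walk p₄ p₁}
    {C : G.Walk p₁ p₃} {D : G.Walk p₂ p₄} (hX : X.IsPath) (hY : Y.IsPath) (hC : C.IsPath)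
    (hD : D.IsPath) (hXY : ∀ s ∈ X.support, s ∉ Y.support)
    (hCD : ∀ s ∈ C.support, s ∉ D.support)
    (hCX : ∀ s ∈ C.support, s ∈ X.support → s = p₃)
    (hCY : ∀ s ∈ C.support, s ∈ Y.support → s = p₁)
    (hDX : ∀ s ∈ D.support, s ∈ X.support → s = p₂)
    (hDY : ∀ s ∈ D.support, s ∈ Y.support → s = p₄) :
    ((C.append X.reverse).append (D.append Y)).IsCycle := by
  have h₁ : (C.append X.reverse).IsPath :=
    hC.append hX.reverse fun s hs hs' ↦ hCX s hs (by simpa using hs')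
  have h₂ : (D.append Y).IsPath := hD.append hY hDY
  refine h₁.isCycle_append h₂ (fun s hs₁ hs₂ ↦ ?_) (.inl ?_)
  · have hsp₁ : s ≠ p₁ := fun h ↦ h₁.start_notMem_support_tail (h ▸ hs₁)
    have hsp₂ : s ≠ p₂ := fun h ↦ h₂.start_notMem_support_tail (h ▸ hs₂)
    have hs₁' := List.mem_of_mem_tail hs₁
    have hs₂' := List.mem_of_mem_tail hs₂
    simp only [mem_support_append_iff, support_reverse, List.mem_reverse] at hs₁' hs₂'
    grind
  · have hC₀ : C.length ≠ 0 := fun h ↦ hXY p₃ X.end_mem_support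
      (eq_of_length_eq_zero h ▸ Y.end_mem_support)
    have hX₀ : X.length ≠ 0 := fun h ↦ hCD p₃ C.end_mem_support
      (eq_of_length_eq_zero h ▸ D.start_mem_support)
    simp only [length_append, length_reverse]
    omega

end SimpleGraph.Walk

namespace Paper

variable {V : Type*}

section

variable {G : SimpleGraph V} {u v : V}

theorem IsLongestCycle.append_comm {p : G.Walk u v} {q : G.Walk v u}
    (h : IsLongestCycle (p.append q)) : IsLongestCycle (q.append p) :=
  ⟨h.1.append_comm, fun w d hd ↦ by simpa [Nat.add_comm] using h.2 w d hd⟩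

theorem IsLongestCycle.rotate [DecidableEq V] {c : G.Walk u u} (h : IsLongestCycle c)
    (hv : v ∈ c.support) : IsLongestCycle (c.rotate v hv) :=
  ⟨h.1.rotate hv, by simpa using h.2⟩

theorem IsLongestCycle.reverse {c : G.Walk u u} (h : IsLongestCycle c) :
    IsLongestCycle c.reverse :=
  ⟨h.1.reverse, by simpa using h.2⟩

theorem IsLongestCycle.exists_append_of_edges_subset [DecidableEq V] {a b : V}
    {c : G.Walk u u} (hc : IsLongestCycle c) {I : G.Walk a b} (hI : I.IsPath) (hIn : ¬I.Nil)
    (hIc : I.edges ⊆ c.edges) :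
    ∃ E : G.Walk b a, IsLongestCycle (I.append E) ∧
      (∀ v, v ∈ (I.append E).support ↔ v ∈ c.support) ∧ c.edges ⊆ (I.append E).edges := by
  have ha : a ∈ c.support := c.fst_mem_support_of_mem_edges (hIc (I.mk_start_snd_mem_edges hIn))
  have hrot := (c.rotate_edges a ha).perm
  obtain ⟨E, hE | hE⟩ := (hc.rotate ha).1.exists_eq_append_or_reverse_eq_append hI hIn
    fun e he ↦ hrot.mem_iff.mpr (hIc he)
  · refine ⟨E, hE ▸ hc.rotate ha, fun v ↦ ?_, fun e he ↦ ?_⟩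
    · rw [← hE, Walk.mem_support_rotate_iff]
    · rw [← hE]
      exact hrot.mem_iff.mpr he
  · refine ⟨E, hE ▸ (hc.rotate ha).reverse, fun v ↦ ?_, fun e he ↦ ?_⟩
    · rw [← hE, Walk.support_reverse, List.mem_reverse, Walk.mem_support_rotate_iff]
    · rw [← hE, Walk.edges_reverse, List.mem_reverse]
      exact hrot.mem_iff.mpr he

theorem IsLongestCycle.length_add_length_le_of_crossing {p₁ p₂ p₃ p₄ : V} {A₁ : G.Walk p₁ p₂}
    {A₂ : G.Walk p₂ p₃} {A₃ : G.Walk p₃ p₄} {A₄ : G.Walk p₄ p₁}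
    (hd : IsLongestCycle (A₁.append (A₂.append (A₃.append A₄)))) (hA₁ : ¬A₁.Nil)
    (hA₃ : ¬A₃.Nil) {C : G.Walk p₁ p₃} {D : G.Walk p₂ p₄} (hC : C.IsPath) (hD : D.IsPath)
    (hCD : ∀ s ∈ C.support, s ∉ D.support)
    (hCd : ∀ s ∈ C.support, s ∈ (A₁.append (A₂.append (A₃.append A₄))).support →
      s = p₁ ∨ s = p₃)
    (hDd : ∀ s ∈ D.support, s ∈ (A₁.append (A₂.append (A₃.append A₄))).support →
      s = p₂ ∨ s = p₄) :
    C.length + D.length ≤ A₁.length + A₃.length := by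
  have h₂₃₄ := hd.1.isPath_of_append_right hA₁
  have h₃₄ := h₂₃₄.of_append_right
  have hA₂A₄ : ∀ s ∈ A₂.support, s ∉ A₄.support := by
    intro s hs₂ hs₄
    have hs : s = p₃ := by
      by_contra hne
      exact h₂₃₄.ne_of_mem_support_of_append hne hs₂
        ((Walk.mem_support_append_iff _ _).mpr (.inr hs₄)) rfl
    subst hs
    refine hA₃ (h₃₄.of_append_left.nil_iff_eq.mpr ?_)
    by_contra hne
    exact h₃₄.ne_of_mem_support_of_append hne A₃.start_mem_support hs₄ rfl
  have hW := Walk.isCycle_of_crossing_chords h₂₃₄.of_append_left h₃₄.of_append_right hC hD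
    hA₂A₄ hCD ?_ ?_ ?_ ?_
  · have := hd.2 _ _ hW
    simp only [Walk.length_append, Walk.length_reverse] at this
    omega
  · intro s hs hs₂
    rcases hCd s hs (by simp [Walk.mem_support_append_iff, hs₂]) with rfl | rfl
    exacts [absurd A₄.end_mem_support (hA₂A₄ _ hs₂), rfl]
  · intro s hs hs₄
    rcases hCd s hs (by simp [Walk.mem_support_append_iff, hs₄]) with rfl | rfl
    exacts [rfl, absurd hs₄ (hA₂A₄ _ A₂.end_mem_support)]
  · intro s hs hs₂
    rcases hDd s hs (by simp [Walk.mem_support_append_iff, hs₂]) with rfl | rfl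
    exacts [rfl, absurd A₄.start_mem_support (hA₂A₄ _ hs₂)]
  · intro s hs hs₄
    rcases hDd s hs (by simp [Walk.mem_support_append_iff, hs₄]) with rfl | rfl
    exacts [absurd hs₄ (hA₂A₄ _ A₂.start_mem_support), rfl]

theorem IsLongestCycle.segment_length_bound {a b a' b' z w x y : V} {Q : G.Walk a b}
    {B₁ : G.Walk b a'} {J : G.Walk a' b'} {B₂ : G.Walk b' a}
    (hd : IsLongestCycle (Q.append (B₁.append (J.append B₂)))) {A : Set V}
    (hA : ∀ s ∈ A, G.Adj s x ∧ G.Adj y s) (ha : a ∈ A) (hb : b ∈ A) (ha' : a' ∈ A) (hb' : b' ∈ A)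
    (hz : z ∈ Q.support) (hzA : z ∉ A) (hw : w ∈ J.support) (hwA : w ∉ A)
    {P : G.Walk x y} (hP : P.IsPath)
    (hPd : ∀ s ∈ P.support, s ∉ (Q.append (B₁.append (J.append B₂))).support)
    {L : G.Walk z w} (hL : L.IsPath)
    (hLd : ∀ s ∈ L.support, s ∈ (Q.append (B₁.append (J.append B₂))).support ∨ s ∈ P.support →
      s = z ∨ s = w) :
    2 * P.length + 2 * L.length + 4 ≤ Q.length + J.length := by
  classical
  have hzw : ∀ s ∈ A, z ≠ s ∧ w ≠ s := fun s hs ↦ ⟨fun h ↦ hzA (h ▸ hs), fun h ↦ hwA (h ▸ hs)⟩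
  obtain ⟨Q₁, Q₂, rfl⟩ : ∃ (Q₁ : G.Walk a z) (Q₂ : G.Walk z b), Q = Q₁.append Q₂ :=
    ⟨_, _, (Q.take_spec hz).symm⟩
  obtain ⟨J₁, J₂, rfl⟩ : ∃ (J₁ : G.Walk a' w) (J₂ : G.Walk w b'), J = J₁.append J₂ :=
    ⟨_, _, (J.take_spec hw).symm⟩
  have hQ₁ : ¬Q₁.Nil := Walk.not_nil_of_ne (hzw a ha).1.symm
  have hQ₂ : ¬Q₂.Nil := Walk.not_nil_of_ne (hzw b hb).1
  have hJ₁ : ¬J₁.Nil := Walk.not_nil_of_ne (hzw a' ha').2.symm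
  have hJ₂ : ¬J₂.Nil := Walk.not_nil_of_ne (hzw b' hb').2
  have haa' : a ≠ a' :=
    (show IsLongestCycle (((Q₁.append Q₂).append B₁).append ((J₁.append J₂).append B₂)) by
      simpa only [Walk.append_assoc] using hd).1.ne_of_append
      (by simp [Walk.nil_append_iff, hQ₁]) (by simp [Walk.nil_append_iff, hJ₁])
  have hbb' : b ≠ b' :=
    (show IsLongestCycle ((B₁.append (J₁.append J₂)).append (B₂.append (Q₁.append Q₂))) by
      simpa only [Walk.append_assoc] using hd.append_comm).1.ne_of_append
      (by simp [Walk.nil_append_iff, hJ₁]) (by simp [Walk.nil_append_iff, hQ₁])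
  replace hd : IsLongestCycle (Q₁.append (Q₂.append (B₁.append (J₁.append (J₂.append B₂))))) := by
    simpa only [Walk.append_assoc] using hd
  simp only [Walk.mem_support_append_iff] at hPd hLd
  have hC₁ : (Walk.cons (hA a ha).1 (P.concat (hA a' ha').2)).IsPath :=
    hP.cons_concat (hPd a · (by simp)) (hPd a' · (by simp)) haa'
  have hC₂ : (Walk.cons (hA b hb).1 (P.concat (hA b' hb').2)).IsPath :=
    hP.cons_concat (hPd b · (by simp)) (hPd b' · (by simp)) hbb'
  have h₁ := IsLongestCycle.length_add_length_le_of_crossing (A₁ := Q₁) (A₂ := Q₂.append B₁)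
    (A₃ := J₁) (A₄ := J₂.append B₂) (by simpa only [Walk.append_assoc] using hd) hQ₁ hJ₁ hC₁ hL
    ?_ ?_ ?_
  have h₂ := IsLongestCycle.length_add_length_le_of_crossing (A₁ := Q₂) (A₂ := B₁.append J₁)
    (A₃ := J₂) (A₄ := B₂.append Q₁) (by simpa only [Walk.append_assoc] using hd.append_comm)
    hQ₂ hJ₂ hL hC₂ ?_ ?_ ?_
  · simp only [Walk.length_cons, Walk.length_concat, Walk.length_append] at h₁ h₂ ⊢
    omega
  all_goals
    intro s hs hs'
    simp only [Walk.mem_support_append_iff, Walk.mem_support_cons_concat] at hs hs' ⊢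
    grind [Walk.start_mem_support, Walk.end_mem_support]

theorem not_nil_of_mem_interior {a b v : V} {I : G.Walk a b} (h : v ∈ interior I) : ¬I.Nil :=
  fun hI ↦ h.2.1 (by simpa [Walk.nil_iff_support_eq.mp hI] using h.1)

theorem IsSegment.notMem_edges_of_disjoint_interior {a b a' b' z : V} {c : G.Walk u u}
    {A : Finset V} {Ia : G.Walk a b} {Ib : G.Walk a' b'} (hIa : IsSegment c A Ia)
    (hIb : IsSegment c A Ib) (hdisj : ∀ v, v ∈ interior Ia → v ∉ interior Ib)
    (hz : z ∈ interior Ia) {e : Sym2 V} (he : e ∈ Ib.edges) : e ∉ Ia.edges := by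
  obtain ⟨hIap, -, -, -, -, -, hIaA⟩ := hIa
  obtain ⟨-, -, ha'A, hb'A, -, -, -⟩ := hIb
  have hends : ∀ v ∈ Ia.support, v ∈ Ib.support → v = a ∨ v = b := by
    intro v hva hvb
    by_contra! hv
    have hvA := hIaA v ⟨hva, hv⟩
    have : v = a' ∨ v = b' := by
      by_contra! hv'
      exact hdisj v ⟨hva, hv⟩ ⟨hvb, hv'⟩
    rcases this with rfl | rfl
    exacts [hvA ha'A, hvA hb'A]
  intro he'
  induction e using Sym2.ind with
  | _ v₁ v₂ =>
    have hne := (Ib.adj_of_mem_edges he).ne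
    have hab : s(v₁, v₂) = s(a, b) := by
      rcases hends v₁ (Ia.fst_mem_support_of_mem_edges he') (Ib.fst_mem_support_of_mem_edges he),
        hends v₂ (Ia.snd_mem_support_of_mem_edges he') (Ib.snd_mem_support_of_mem_edges he) with
        ⟨rfl | rfl, rfl | rfl⟩ <;> simp_all [Sym2.eq_swap]
    rw [hab] at he'
    have hz' := hIap.eq_adj_toWalk_of_mem_edges he' ▸ hz.1
    simp only [Adj.toWalk, Walk.support_cons, Walk.support_nil, List.mem_cons,
      List.not_mem_nil, or_false] at hz'
    exact hz'.elim hz.2.1 hz.2.2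

end

theorem stmt_3_general [Fintype V] [DecidableEq V] (G : SimpleGraph V) [DecidableRel G.Adj]
    {u x y : V} (c : G.Walk u u) (P : G.Walk x y)
    (hc : IsLongestCycle c) (hP : IsLongestPathOutside c P)
    (heq : NC G c x = NC G c y)
    {a b a' b' z w : V} (Ia : G.Walk a b) (Ib : G.Walk a' b')
    (hIa : IsSegment c (NC G c x) Ia) (hIb : IsSegment c (NC G c x) Ib)
    (hdisj : ∀ v, v ∈ interior Ia → v ∉ interior Ib)
    (L : G.Walk z w) (hL : IsIntermediatePath c P Ia Ib L) :
    2 * P.length + 2 * L.length + 4 ≤ Ia.length + Ib.length := by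
  have ⟨hIap, _, haA, hbA, _, hIac, hIaA⟩ := hIa
  have ⟨hIbp, _, ha'A, hb'A, _, hIbc, hIbA⟩ := hIb
  obtain ⟨hLp, -, hz, hw, hLc⟩ := hL
  have hadj : ∀ s ∈ NC G c x, G.Adj s x ∧ G.Adj y s := fun s hs ↦
    ⟨((mem_neighborFinset _ _ _).mp (mem_filter.mp hs).1).symm,
      (mem_neighborFinset _ _ _).mp (mem_filter.mp (heq ▸ hs)).1⟩
  have hIan := not_nil_of_mem_interior hz
  obtain ⟨E, hd, hdc, hcd⟩ := hc.exists_append_of_edges_subset hIap hIan hIac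
  have hIbE : Ib.edges ⊆ E.edges := fun e he ↦ by
    rcases List.mem_append.mp (Walk.edges_append _ _ ▸ hcd (hIbc e he)) with he' | he'
    · exact absurd he' (hIa.notMem_edges_of_disjoint_interior hIb hdisj hz he)
    · exact he'
  have hPd : ∀ s ∈ P.support, s ∉ (Ia.append E).support := fun s hs hs' ↦
    hP.2.1 s hs ((hdc s).mp hs')
  have hLd : ∀ s ∈ L.support, s ∈ (Ia.append E).support ∨ s ∈ P.support → s = z ∨ s = w :=
    fun s hs hs' ↦ hLc s hs (hs'.imp_left (hdc s).mp)
  rcases (hd.1.isPath_of_append_right hIan).exists_eq_append_append_of_edges_subset hIbp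
    (not_nil_of_mem_interior hw) hIbE with ⟨B₁, B₂, rfl⟩ | ⟨B₁, B₂, rfl⟩
  · exact hd.segment_length_bound hadj haA hbA ha'A hb'A hz.1 (hIaA z hz) hw.1 (hIbA w hw) hP.1
      hPd hLp hLd
  · simpa using hd.segment_length_bound hadj haA hbA hb'A ha'A hz.1 (hIaA z hz)
      (by simpa using hw.1) (hIbA w hw) hP.1 hPd hLp hLd

theorem stmt_3 [Fintype V] [DecidableEq V] (G : SimpleGraph V) [DecidableRel G.Adj]
    {u x y : V} (c : G.Walk u u) (P : G.Walk x y)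
    (hc : IsLongestCycle c) (hP : IsLongestPathOutside c P)
    (heq : NC G c x = NC G c y) (h2 : 2 ≤ (NC G c x).card)
    {a b a' b' z w : V} (Ia : G.Walk a b) (Ib : G.Walk a' b')
    (hIa : IsSegment c (NC G c x) Ia) (hIb : IsSegment c (NC G c x) Ib)
    (hdisj : ∀ v, v ∈ interior Ia → v ∉ interior Ib)
    (L : G.Walk z w) (hL : IsIntermediatePath c P Ia Ib L) :
    2 * P.length + 2 * L.length + 4 ≤ Ia.length + Ib.length :=
  stmt_3_general G c P hc hP heq Ia Ib hIa hIb hdisj L hL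
end Paper
end

section
/- Let H ∈ 𝔉₁ (the class defined by identifying the x-vertices of three connected graphs H₁, H₂, H₃ and adding a triangle on y₁, y₂, y₃, with |V(H₁)| = |V(H₂)| = d+1, d+1 ≤ |V(H₃)| ≤ d+2, δ(H) = d ≥ 3). Then some longest cycle in H is not a dominating cycle; in fact no longest cycle of H is dominating. -/
open SimpleGraph Finset

namespace Paper

variable {V : Type*}

/-!
Write `Sᵢ = V(Hᵢ) \ {x, yᵢ}`, nonempty as `|V(Hᵢ)| ≥ 4`. Every edge leaving `Sᵢ` ends in `x` or
`yᵢ`, so a vertex of `Sᵢ`, having at least three neighbours, has one inside `Sᵢ`: each `Sᵢ` spans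
an edge, and a dominating cycle meets all three of them. Cutting a cycle at `x` leaves a path
avoiding `x` that still meets every `Sᵢ`. Some `Sⱼ` contains neither end of that path, so the path
enters and leaves `Sⱼ` through `yⱼ`, visiting `yⱼ` twice. Hence no cycle of `H` is dominating; a
longest cycle exists because `y₁y₂y₃` is a triangle.
-/

theorem _root_.SimpleGraph.Walk.IsCycle.exists_isPath_forall_mem_support {G : SimpleGraph V}
    {u : V} {c : G.Walk u u} (hc : c.IsCycle) (x : V) :
    ∃ (a b : V) (r : G.Walk a b), r.IsPath ∧ x ∉ r.support ∧
      ∀ v ∈ c.support, v ≠ x → v ∈ r.support := by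
  classical
  have mem_tail : ∀ {w : V} {c : G.Walk w w}, ¬ c.Nil → ∀ v ∈ c.support, v ∈ c.support.tail :=
    fun hc v hv => ((Walk.mem_support_iff _).mp hv).elim
      (fun h => h ▸ Walk.end_mem_tail_support hc) id
  by_cases hx : x ∈ c.support
  · set c' := c.rotate x hx
    have hc' : c'.IsCycle := hc.rotate hx
    have htail : ¬ c'.tail.Nil := by
      rw [← Walk.length_eq_zero_iff, Walk.length_tail]
      have := hc'.three_le_length
      omega
    have hsupp := Walk.support_dropLast_concat htail
    have hnd := hsupp ▸ hc'.isPath_tail.support_nodup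
    refine ⟨_, _, c'.tail.dropLast, hc'.isPath_tail.dropLast,
      fun h => List.disjoint_of_nodup_append hnd h (List.mem_singleton_self x), fun v hv hvx => ?_⟩
    have : v ∈ c'.tail.support := by
      rw [Walk.support_tail_of_not_nil _ hc'.not_nil]
      exact (c.support_rotate x hx).mem_iff.mpr (mem_tail hc.not_nil v hv)
    rw [← hsupp, List.mem_append, List.mem_singleton] at this
    exact this.resolve_right hvx
  · refine ⟨_, _, c.tail, hc.isPath_tail, ?_, fun v hv _ => ?_⟩ <;>
      rw [Walk.support_tail_of_not_nil _ hc.not_nil]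
    · exact fun h => hx (List.mem_of_mem_tail h)
    · exact mem_tail hc.not_nil v hv

theorem exists_isLongestCycle [Finite V] {G : SimpleGraph V} {u : V} {c : G.Walk u u}
    (hc : c.IsCycle) : ∃ (v : V) (c' : G.Walk v v), IsLongestCycle c' := by
  have := Fintype.ofFinite V
  set s := {n | ∃ (v : V) (c : G.Walk v v), c.IsCycle ∧ c.length = n}
  have hs : s.Finite := (Set.finite_le_nat (Fintype.card V)).subset fun n ⟨_, c, hc, hn⟩ => by
    have := hc.isPath_tail.length_lt
    rw [Walk.length_tail] at this
    exact hn ▸ Nat.le_of_pred_lt this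
  obtain ⟨_, ⟨v, c', hc', rfl⟩, hmax⟩ := Set.exists_max_image s id hs ⟨_, u, c, hc, rfl⟩
  exact ⟨v, c', hc', fun w d hd => hmax _ ⟨w, d, hd, rfl⟩⟩

theorem nonempty_diff_pair_of_two_lt_ncard {A : Set V} (x y : V) (hA : 2 < A.ncard) :
    (A \ {x, y}).Nonempty :=
  Set.sdiff_nonempty_of_ncard_lt_ncard
    ((Set.ncard_insert_le x {y}).trans_lt (by rwa [Set.ncard_singleton]))

def ExitsThrough (G : SimpleGraph V) (S T : Set V) : Prop :=
  ∀ a ∈ S, ∀ b, G.Adj a b → b ∈ S ∨ b ∈ T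

namespace ExitsThrough

variable {G : SimpleGraph V} {S T : Set V}

theorem exists_mem_support (h : ExitsThrough G S T) {u v : V} (p : G.Walk u v) (hu : u ∈ S)
    (hv : v ∉ S) : ∃ t ∈ p.support, t ∈ T ∧ t ∉ S := by
  obtain ⟨d, hd, hdS, hdS'⟩ := p.exists_boundary_dart S hu hv
  exact ⟨d.snd, p.dart_snd_mem_support_of_mem_darts hd,
    (h _ hdS _ d.adj).resolve_left hdS', hdS'⟩

theorem exists_ne_mem_support_of_isPath (h : ExitsThrough G S T) {u v z : V}
    {p : G.Walk u v} (hp : p.IsPath) (hu : u ∉ S) (hv : v ∉ S) (hz : z ∈ p.support)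
    (hzS : z ∈ S) : ∃ t₁ ∈ p.support, ∃ t₂ ∈ p.support, t₁ ∈ T ∧ t₂ ∈ T ∧ t₁ ≠ t₂ := by
  classical
  obtain ⟨t₁, ht₁, hT₁, -⟩ := h.exists_mem_support (p.takeUntil z hz).reverse hzS hu
  obtain ⟨t₂, ht₂, hT₂, hS₂⟩ := h.exists_mem_support (p.dropUntil z hz) hzS hv
  rw [Walk.support_reverse, List.mem_reverse] at ht₁
  have ht₂' : t₂ ∈ (p.dropUntil z hz).support.tail :=
    ((Walk.mem_support_iff _).mp ht₂).resolve_left fun h => hS₂ (h ▸ hzS)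
  have hdisj : (p.takeUntil z hz).support.Disjoint (p.dropUntil z hz).support.tail := by
    have := hp.support_nodup
    rw [← p.take_spec hz, Walk.support_append] at this
    exact List.disjoint_of_nodup_append this
  exact ⟨t₁, p.support_takeUntil_subset_support hz ht₁, t₂,
    p.support_dropUntil_subset_support hz ht₂, hT₁, hT₂, fun he => hdisj ht₁ (he ▸ ht₂')⟩

theorem exists_adj [Fintype V] [DecidableRel G.Adj] {T : Finset V} (h : ExitsThrough G S T)
    {a : V} (ha : a ∈ S) (hdeg : T.card < G.degree a) : ∃ b ∈ S, G.Adj a b := by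
  by_contra! hno
  have hsub : G.neighborFinset a ⊆ T := fun b hb => by
    rw [mem_neighborFinset] at hb
    exact (h a ha b hb).resolve_left fun hbS => hno b hbS hb
  have := card_le_card hsub
  rw [card_neighborFinset_eq_degree] at this
  omega

end ExitsThrough

theorem exists_notMem_notMem_of_pairwise_disjoint {S : Fin 3 → Set V}
    (hS : Pairwise fun i j => Disjoint (S i) (S j)) (a b : V) : ∃ j, a ∉ S j ∧ b ∉ S j := by
  have atMostOne (v : V) : ∃ i, ∀ j, j ≠ i → v ∉ S j := by
    by_cases hv : ∃ i, v ∈ S i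
    · obtain ⟨i, hi⟩ := hv
      exact ⟨i, fun j hji hj => Set.disjoint_left.mp (hS hji) hj hi⟩
    · exact ⟨0, fun j _ hj => hv ⟨j, hj⟩⟩
  have third : ∀ i k : Fin 3, ∃ j, j ≠ i ∧ j ≠ k := by decide
  obtain ⟨i, hi⟩ := atMostOne a
  obtain ⟨k, hk⟩ := atMostOne b
  obtain ⟨j, hji, hjk⟩ := third i k
  exact ⟨j, hi j hji, hk j hjk⟩

section ThreeBlocks

variable {G : SimpleGraph V} {x : V} {y : Fin 3 → V} {S : Fin 3 → Set V}

theorem not_forall_exists_mem_support_of_isPath (hS : Pairwise fun i j => Disjoint (S i) (S j))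
    (hexit : ∀ i, ExitsThrough G (S i) {x, y i}) {a b : V} {r : G.Walk a b} (hr : r.IsPath)
    (hx : x ∉ r.support) : ¬ ∀ i, ∃ z ∈ r.support, z ∈ S i := by
  intro hmeet
  obtain ⟨j, haj, hbj⟩ := exists_notMem_notMem_of_pairwise_disjoint hS a b
  obtain ⟨z, hz, hzS⟩ := hmeet j
  obtain ⟨t₁, ht₁, t₂, ht₂, hT₁, hT₂, hne⟩ :=
    (hexit j).exists_ne_mem_support_of_isPath hr haj hbj hz hzS
  have gate : ∀ t ∈ r.support, t ∈ ({x, y j} : Set V) → t = y j := fun t ht hT =>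
    hT.resolve_left fun h => hx (h ▸ ht)
  exact hne ((gate t₁ ht₁ hT₁).trans (gate t₂ ht₂ hT₂).symm)

theorem not_forall_exists_mem_support_of_isCycle (hS : Pairwise fun i j => Disjoint (S i) (S j))
    (hexit : ∀ i, ExitsThrough G (S i) {x, y i}) (hxS : ∀ i, x ∉ S i) {u : V}
    {c : G.Walk u u} (hc : c.IsCycle) : ¬ ∀ i, ∃ z ∈ c.support, z ∈ S i := by
  intro hmeet
  obtain ⟨a, b, r, hr, hx, hsub⟩ := hc.exists_isPath_forall_mem_support x
  refine not_forall_exists_mem_support_of_isPath hS hexit hr hx fun i => ?_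
  obtain ⟨z, hz, hzS⟩ := hmeet i
  exact ⟨z, hsub z hz fun h => hxS i (h ▸ hzS), hzS⟩

end ThreeBlocks

section Blocks

variable {G : SimpleGraph V} {x : V} {y : Fin 3 → V} {A : Fin 3 → Set V}

theorem eq_of_mem_of_mem (hA : ∀ i j, i ≠ j → A i ∩ A j = {x}) {i j : Fin 3} (hij : i ≠ j)
    {v : V} (hi : v ∈ A i) (hj : v ∈ A j) : v = x := by
  simpa [hA i j hij] using Set.mem_inter hi hj

theorem pairwise_disjoint_diff_pair (hA : ∀ i j, i ≠ j → A i ∩ A j = {x}) :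
    Pairwise fun i j => Disjoint (A i \ {x, y i}) (A j \ {x, y j}) :=
  fun _ _ hij => Set.disjoint_left.mpr fun _ hi hj =>
    hi.2 (Or.inl (eq_of_mem_of_mem hA hij hi.1 hj.1))

theorem exitsThrough_diff_pair (hA : ∀ i j, i ≠ j → A i ∩ A j = {x}) (hyA : ∀ i, y i ∈ A i)
    (hE : ∀ a b, G.Adj a b → (∃ i, a ∈ A i ∧ b ∈ A i) ∨ a ∈ Set.range y) (i : Fin 3) :
    ExitsThrough G (A i \ {x, y i}) {x, y i} := by
  rintro a ⟨ha, hxy⟩ b hab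
  have hax : a ≠ x := fun h => hxy (Or.inl h)
  suffices hb : b ∈ A i by
    by_cases hbT : b ∈ ({x, y i} : Set V)
    exacts [Or.inr hbT, Or.inl ⟨hb, hbT⟩]
  rcases hE a b hab with ⟨j, haj, hbj⟩ | ⟨k, rfl⟩
  · obtain rfl | hij := eq_or_ne i j
    exacts [hbj, absurd (eq_of_mem_of_mem hA hij ha haj) hax]
  · obtain rfl | hik := eq_or_ne i k
    exacts [absurd (Or.inr rfl) hxy, absurd (eq_of_mem_of_mem hA hik ha (hyA k)) hax]

theorem not_isDominating_of_isCycle [Fintype V] [DecidableRel G.Adj]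
    (hA : ∀ i j, i ≠ j → A i ∩ A j = {x}) (hyA : ∀ i, y i ∈ A i)
    (hE : ∀ a b, G.Adj a b → (∃ i, a ∈ A i ∧ b ∈ A i) ∨ a ∈ Set.range y)
    (hcard : ∀ i, 2 < (A i).ncard) (hdeg : ∀ v, 2 < G.degree v) {u : V} {c : G.Walk u u}
    (hc : c.IsCycle) : ¬ IsDominating c := by
  classical
  intro hdom
  have hexit := exitsThrough_diff_pair hA hyA hE
  refine not_forall_exists_mem_support_of_isCycle (pairwise_disjoint_diff_pair hA) hexit
    (fun i h => h.2 (Or.inl rfl)) hc fun i => ?_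
  obtain ⟨a, ha⟩ := nonempty_diff_pair_of_two_lt_ncard x (y i) (hcard i)
  have hexit' : ExitsThrough G (A i \ {x, y i}) ↑({x, y i} : Finset V) := by
    rw [coe_pair]; exact hexit i
  obtain ⟨b, hb, hab⟩ := hexit'.exists_adj ha (card_le_two.trans_lt (hdeg a))
  rcases hdom a b hab with h | h
  exacts [⟨a, h, ha⟩, ⟨b, h, hb⟩]

end Blocks

theorem stmt_9_general [Fintype V] (H : SimpleGraph V) [DecidableRel H.Adj]
    (d : ℕ) (h : InF1 H d) :
    (∃ (u : V) (c : H.Walk u u), IsLongestCycle c ∧ ¬ IsDominating c) ∧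
    ∀ (u : V) (c : H.Walk u u), IsLongestCycle c → ¬ IsDominating c := by
  classical
  obtain ⟨x, y₁, y₂, y₃, A, hA, -, hy₁, hy₂, hy₃, -, -, -, h₁₂, h₂₃, h₁₃, hE, -, hc₀, hc₁, hc₂, -,
    hδ, hd⟩ := h
  have hyA : ∀ i, ![y₁, y₂, y₃] i ∈ A i := by
    intro i; fin_cases i; exacts [hy₁, hy₂, hy₃]
  have hE' : ∀ a b, H.Adj a b → (∃ i, a ∈ A i ∧ b ∈ A i) ∨ a ∈ Set.range ![y₁, y₂, y₃] :=
    fun a b hab => (hE a b hab).imp_right fun h => by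
      simp only [Set.mem_insert_iff, Set.mem_singleton_iff, Sym2.eq_iff] at h
      simp only [Matrix.range_cons, Matrix.range_empty, Set.union_empty, Set.singleton_union,
        Set.mem_insert_iff, Set.mem_singleton_iff]
      tauto
  have hcard : ∀ i, 2 < (A i).ncard := by
    intro i; rw [← Nat.card_coe_set_eq]; fin_cases i <;> dsimp only [Fin.reduceFinMk] <;> omega
  have hdeg : ∀ v, 2 < H.degree v := fun v => by have := H.minDegree_le_degree v; omega
  have nondom : ∀ (u : V) (c : H.Walk u u), c.IsCycle → ¬ IsDominating c :=
    fun _ _ => not_isDominating_of_isCycle hA hyA hE' hcard hdeg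
  obtain ⟨_, t, ht, -⟩ := is3Clique_iff_exists_cycle_length_three.mp
    ⟨_, is3Clique_triple_iff.mpr ⟨h₁₂, h₁₃, h₂₃⟩⟩
  obtain ⟨u, c, hc⟩ := exists_isLongestCycle ht
  exact ⟨⟨u, c, hc, nondom u c hc.1⟩, fun u c hc => nondom u c hc.1⟩

theorem stmt_9 [Fintype V] [DecidableEq V] (H : SimpleGraph V) [DecidableRel H.Adj]
    (d : ℕ) (h : InF1 H d) :
    (∃ (u : V) (c : H.Walk u u), IsLongestCycle c ∧ ¬ IsDominating c) ∧
    ∀ (u : V) (c : H.Walk u u), IsLongestCycle c → ¬ IsDominating c :=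
  stmt_9_general H d h
end Paper
end

section
/- Let G be a 1-tough graph with δ(G) = 2, C a longest cycle, and suppose some component of G \ C contains an edge (i.e., a longest path in G \ C has length ≥ 1). If moreover n ≤ 3δ + 2 = 8 and |C| ≥ 2δ + 2 = 6, then a contradiction follows; hence every 1-tough graph G with δ(G) = 2 and n ≤ 8 has every longest cycle dominating. -/
open SimpleGraph Finset

namespace Paper

variable {V : Type*}

/-!
Let `xy` be an edge missed by a longest cycle `C`.

First, `|C| ≥ 6`. By 1-toughness the component `H` of `G - C` containing `x` is attached to `C`
at two distinct vertices. A path through `H` between two attachment vertices could replace either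
arc of `C` between them, so its length is at most `|C| / 2`; if `|C| ≤ 5`, all edges from `C` to
`H` therefore end in one vertex of `H`, which is then a cut vertex.

With `n ≤ 8` we are left with a hexagon `c₀ … c₅` together with `x` and `y`, each of which has a
neighbour on it since `δ = 2`. Neighbours `c_a` of `x` and `c_b` of `y` with `b - a ∈ {±1, ±2}`
would give a cycle of length 7 or 8, so all these neighbours lie in an antipodal pair `{c₀, c₃}`.
If `x` and `y` see different vertices of the pair, the chords between `{c₁, c₂}` and `{c₄, c₅}`
are excluded in the same way and removing `{c₀, c₃}` leaves three components; otherwise a single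
vertex separates `{x, y}` from the rest. Either way 1-toughness fails.
-/

section
variable {G : SimpleGraph V}

def Separates (G : SimpleGraph V) (S K : Set V) : Prop :=
  ∀ a b, a ∉ S → b ∉ S → G.Adj a b → a ∈ K → b ∈ K

lemma Separates.connectedComponentMk_ne {S K : Set V} (hK : Separates G S K) {a b : ↥Sᶜ}
    (haK : ↑a ∈ K) (hbK : ↑b ∉ K) :
    (G.induce Sᶜ).connectedComponentMk a ≠ (G.induce Sᶜ).connectedComponentMk b := by
  rw [Ne, ConnectedComponent.eq]
  rintro ⟨w⟩
  induction w with
  | nil => exact hbK haK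
  | @cons u v _ hadj _ ih => exact ih (hK u v u.2 v.2 hadj haK) hbK

lemma two_le_compCount [Finite V] {S K : Set V} (hK : Separates G S K) {a b : V}
    (ha : a ∉ S) (hb : b ∉ S) (haK : a ∈ K) (hbK : b ∉ K) : 2 ≤ compCount G S :=
  Finite.one_lt_card_iff_nontrivial.2
    ⟨_, _, hK.connectedComponentMk_ne (a := ⟨a, ha⟩) (b := ⟨b, hb⟩) haK hbK⟩

lemma three_le_compCount [Finite V] {S K L : Set V} (hK : Separates G S K)
    (hL : Separates G S L) {a b c : V} (ha : a ∉ S) (hb : b ∉ S) (hc : c ∉ S)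
    (haK : a ∈ K) (hbK : b ∉ K) (hcK : c ∉ K) (hbL : b ∈ L) (hcL : c ∉ L) :
    3 ≤ compCount G S := by
  have := Fintype.ofFinite (G.induce Sᶜ).ConnectedComponent
  rw [compCount, Nat.card_eq_fintype_card]
  exact Fintype.two_lt_card_iff.2 ⟨_, _, _,
    hK.connectedComponentMk_ne (a := ⟨a, ha⟩) (b := ⟨b, hb⟩) haK hbK,
    hK.connectedComponentMk_ne (a := ⟨a, ha⟩) (b := ⟨c, hc⟩) haK hcK,
    hL.connectedComponentMk_ne (a := ⟨b, hb⟩) (b := ⟨c, hc⟩) hbL hcL⟩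

lemma OneTough.two_le_card [Fintype V] (ht : OneTough G) {S : Finset V} {K : Set V}
    (hK : Separates G S K) {a b : V} (ha : a ∉ S) (hb : b ∉ S) (haK : a ∈ K) (hbK : b ∉ K) :
    2 ≤ S.card := by
  have h2 := two_le_compCount hK (by simpa) (by simpa) haK hbK
  have := ht S (by omega)
  omega

lemma OneTough.three_le_card [Fintype V] (ht : OneTough G) {S : Finset V} {K L : Set V}
    (hK : Separates G S K) (hL : Separates G S L) {a b c : V} (ha : a ∉ S) (hb : b ∉ S)
    (hc : c ∉ S) (haK : a ∈ K) (hbK : b ∉ K) (hcK : c ∉ K) (hbL : b ∈ L) (hcL : c ∉ L) :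
    3 ≤ S.card := by
  have h3 := three_le_compCount hK hL (by simpa) (by simpa) (by simpa) haK hbK hcK hbL hcL
  have := ht S (by omega)
  omega

lemma separates_pair {S : Set V} {x y : V} (hx : ∀ w, G.Adj x w → w = y ∨ w ∈ S)
    (hy : ∀ w, G.Adj y w → w = x ∨ w ∈ S) : Separates G S {x, y} := by
  rintro v w - hw hvw (rfl | rfl)
  · rcases hx w hvw with rfl | h
    exacts [Or.inr rfl, absurd h hw]
  · rcases hy w hvw with rfl | h
    exacts [Or.inl rfl, absurd h hw]

lemma exists_isCycle_of_isChain {l : List V} (hne : l ≠ []) (hchain : l.IsChain G.Adj)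
    (hnd : l.Nodup) (hclose : G.Adj (l.getLast hne) (l.head hne)) (h3 : 3 ≤ l.length) :
    ∃ (u : V) (c : G.Walk u u), c.IsCycle ∧ c.length = l.length := by
  set p := Walk.ofSupport l hne hchain
  refine ⟨_, Walk.cons hclose p, ?_, by simp [p]; omega⟩
  rw [Walk.isCycle_iff_isPath_tail_and_le_length]
  refine ⟨?_, by simp [p]; omega⟩
  simpa [Walk.isPath_def, p] using hnd

lemma length_le_of_isChain {N : ℕ} (hlong : ∀ (v : V) (d : G.Walk v v), d.IsCycle → d.length ≤ N)
    {l : List V} (hne : l ≠ []) (hchain : l.IsChain G.Adj)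
    (hnd : l.Nodup) (hclose : G.Adj (l.getLast hne) (l.head hne)) (h3 : 3 ≤ l.length) :
    l.length ≤ N := by
  obtain ⟨v, d, hd, hlen⟩ := exists_isCycle_of_isChain hne hchain hnd hclose h3
  exact hlen ▸ hlong v d hd

lemma length_add_two_le_of_isChain {ι : Type*} {N : ℕ}
    (hlong : ∀ (v : V) (d : G.Walk v v), d.IsCycle → d.length ≤ N) {f : ι → V}
    (hf : Function.Injective f) {x y : V} (hxy : G.Adj x y) (hx : ∀ k, f k ≠ x)
    (hy : ∀ k, f k ≠ y) {ks : List ι} (hks : ks.Nodup) (hne : ks ≠ [])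
    (hchain : (x :: ks.map f ++ [y]).IsChain G.Adj) : ks.length + 2 ≤ N := by
  have hnd : (x :: ks.map f ++ [y]).Nodup := by
    simp [List.nodup_append, List.nodup_map_iff hf, hks, hx, hy, hxy.ne]
  have := length_le_of_isChain hlong (by simp) hchain hnd (by simpa using hxy.symm)
    (by have := List.length_pos_iff.2 hne; simp; omega)
  simp at this
  omega

lemma _root_.SimpleGraph.Walk.IsCycle.card_toFinset_support_tail [DecidableEq V] {u : V}
    {c : G.Walk u u} (hc : c.IsCycle) : c.support.tail.toFinset.card = c.length := by
  rw [List.toFinset_card_of_nodup hc.support_nodup, List.length_tail, Walk.length_support]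
  rfl

lemma _root_.SimpleGraph.Walk.IsCycle.card_toFinset_support_tail_union [DecidableEq V] {u : V}
    {c : G.Walk u u} (hc : c.IsCycle) {x y : V} (hxy : x ≠ y) (hx : x ∉ c.support)
    (hy : y ∉ c.support) : (c.support.tail.toFinset ∪ {x, y}).card = c.length + 2 := by
  rw [Finset.card_union_of_disjoint, hc.card_toFinset_support_tail, Finset.card_pair hxy]
  simp only [Finset.disjoint_insert_right, Finset.disjoint_singleton_right, List.mem_toFinset]
  exact ⟨fun h => hx (List.mem_of_mem_tail h), fun h => hy (List.mem_of_mem_tail h)⟩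

lemma _root_.SimpleGraph.Walk.IsCycle.exists_arcs [DecidableEq V] {u : V} {c : G.Walk u u}
    (hc : c.IsCycle) {s t : V} (hs : s ∈ c.support) (ht : t ∈ c.support) (hst : s ≠ t) :
    ∃ (q : G.Walk s t) (r : G.Walk t s), q.IsPath ∧ r.IsPath ∧
      q.length + r.length = c.length ∧ q.support ⊆ c.support ∧ r.support ⊆ c.support := by
  have hc' := hc.rotate hs
  have ht' : t ∈ (c.rotate s hs).support := (c.mem_support_rotate_iff s hs).2 ht
  have hspec := (c.rotate s hs).take_spec ht'
  refine ⟨_, (c.rotate s hs).dropUntil t ht', hc'.isPath_takeUntil ht', ?_, ?_, ?_, ?_⟩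
  · exact (hspec ▸ hc').isPath_of_append_right (Walk.not_nil_of_ne hst)
  · rw [← c.length_rotate s hs, ← Walk.length_append, hspec]
  · exact fun z hz => ((c.mem_support_rotate_iff s hs).1
      ((c.rotate s hs).support_takeUntil_subset_support ht' hz))
  · exact fun z hz => ((c.mem_support_rotate_iff s hs).1
      ((c.rotate s hs).support_dropUntil_subset_support ht' hz))

section LongestCycle
variable {u : V} {c : G.Walk u u}

lemma IsLongestCycle.length_add_length_le (hc : IsLongestCycle c) {s t : V} {W : G.Walk s t}
    {r : G.Walk t s} (hW : W.IsPath) (hr : r.IsPath) (h2 : 2 ≤ W.length)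
    (hWc : ∀ z ∈ W.support, z ∈ c.support → z = s ∨ z = t) (hrc : r.support ⊆ c.support) :
    W.length + r.length ≤ c.length := by
  have hcyc : (W.append r).IsCycle := by
    refine hW.isCycle_append hr (fun z hzW hzr => ?_) (Or.inl h2)
    rcases hWc z (List.mem_of_mem_tail hzW) (hrc (List.mem_of_mem_tail hzr)) with rfl | rfl
    · exact (List.nodup_cons.1 (W.cons_tail_support ▸ hW.support_nodup)).1 hzW
    · exact (List.nodup_cons.1 (r.cons_tail_support ▸ hr.support_nodup)).1 hzr
  simpa using hc.2 _ _ hcyc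

lemma IsLongestCycle.two_mul_length_le [DecidableEq V] (hc : IsLongestCycle c) {s t : V}
    (hs : s ∈ c.support) (ht : t ∈ c.support) (hst : s ≠ t) {W : G.Walk s t} (hW : W.IsPath)
    (hWc : ∀ z ∈ W.support, z ∈ c.support → z = s ∨ z = t) : 2 * W.length ≤ c.length := by
  have h3 := hc.1.three_le_length
  by_cases h2 : W.length < 2
  · omega
  obtain ⟨q, r, hq, hr, hqr, hqc, hrc⟩ := hc.1.exists_arcs hs ht hst
  have h1 := hc.length_add_length_le hW hr (by omega) hWc hrc
  have h2 := hc.length_add_length_le hW hq.reverse (by omega) hWc (by simpa using hqc)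
  rw [Walk.length_reverse] at h2
  omega

end LongestCycle

def IsCycleLabelling (G : SimpleGraph V) {n : ℕ} (f : ZMod n → V) : Prop :=
  Function.Injective f ∧ ∀ k, G.Adj (f k) (f (k + 1))

namespace IsCycleLabelling
variable {n : ℕ} {f : ZMod n → V}

lemma adj (hf : IsCycleLabelling G f) {i j : ZMod n} (h : j = i + 1 ∨ i = j + 1) :
    G.Adj (f i) (f j) := by
  rcases h with rfl | rfl
  · exact hf.2 i
  · exact (hf.2 j).symm

lemma add_left (hf : IsCycleLabelling G f) (a : ZMod n) :
    IsCycleLabelling G (fun k => f (a + k)) :=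
  ⟨hf.1.comp (add_right_injective a), fun k => by simpa only [add_assoc] using hf.2 (a + k)⟩

end IsCycleLabelling

lemma _root_.SimpleGraph.Walk.IsCycle.isCycleLabelling_getVert {u : V} {c : G.Walk u u}
    (hc : c.IsCycle) {n : ℕ} [NeZero n] (hn : c.length = n) :
    IsCycleLabelling G (fun k : ZMod n => c.getVert k.val) := by
  refine ⟨fun i j hij => ZMod.val_injective n (hc.getVert_injOn' ?_ ?_ hij), fun k => ?_⟩
  · have := i.val_lt; simp only [Set.mem_ofPred_eq]; omega
  · have := j.val_lt; simp only [Set.mem_ofPred_eq]; omega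
  have hk := k.val_lt
  simp only
  rw [ZMod.val_add, ZMod.val_one_eq_one_mod, Nat.add_mod_mod]
  rcases Nat.lt_or_ge (k.val + 1) n with h | h
  · rw [Nat.mod_eq_of_lt h]
    exact c.adj_getVert_succ (by omega)
  · have : k.val + 1 = n := by omega
    have hlast := c.adj_getVert_succ (i := k.val) (by omega)
    rw [c.getVert_of_length_le (i := k.val + 1) (by omega)] at hlast
    rwa [this, Nat.mod_self, c.getVert_zero]

lemma _root_.SimpleGraph.Walk.exists_getVert_zmod_eq {u v : V} {c : G.Walk u u} {n : ℕ} [NeZero n]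
    (hn : c.length = n) (hv : v ∈ c.support) : ∃ k : ZMod n, c.getVert k.val = v := by
  obtain ⟨i, rfl, hi⟩ := Walk.mem_support_iff_exists_getVert.1 hv
  rcases Nat.lt_or_ge i n with h | h
  · exact ⟨i, by rw [ZMod.val_natCast, Nat.mod_eq_of_lt h]⟩
  · refine ⟨0, ?_⟩
    rw [ZMod.val_zero, c.getVert_zero, show i = c.length by omega, c.getVert_length]

section Hexagon
variable {ci : ZMod 6 → V} (hci : IsCycleLabelling G ci)
  (hlong : ∀ (v : V) (d : G.Walk v v), d.IsCycle → d.length ≤ 6)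
  {x y : V} (hxy : G.Adj x y) (hx : ∀ k, ci k ≠ x) (hy : ∀ k, ci k ≠ y)
include hci hlong hxy hx hy

-- Each `ks` below lists the hexagon vertices of a cycle `x, c_ks, y` of length `> 6`.
lemma IsCycleLabelling.not_adj_of_adj_zero (h0 : G.Adj x (ci 0)) {k : ZMod 6}
    (hk : k = 1 ∨ k = 2) : ¬ G.Adj y (ci k) := by
  intro hyk
  rcases hk with rfl | rfl
  · exact absurd (length_add_two_le_of_isChain hlong hci.1 hxy hx hy (ks := [0, 5, 4, 3, 2, 1])
      (by decide) (by simp) (by simp (disch := decide) [h0, hyk.symm, hci.adj])) (by decide)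
  · exact absurd (length_add_two_le_of_isChain hlong hci.1 hxy hx hy (ks := [0, 5, 4, 3, 2])
      (by decide) (by simp) (by simp (disch := decide) [h0, hyk.symm, hci.adj])) (by decide)

lemma IsCycleLabelling.not_adj_chord (h0 : G.Adj x (ci 0)) (h3 : G.Adj y (ci 3))
    {i j : ZMod 6} (hi : i = 1 ∨ i = 2) (hj : j = 4 ∨ j = 5) : ¬ G.Adj (ci i) (ci j) := by
  intro hij
  rcases hi with rfl | rfl <;> rcases hj with rfl | rfl
  · exact absurd (length_add_two_le_of_isChain hlong hci.1 hxy hx hy (ks := [0, 5, 4, 1, 2, 3])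
      (by decide) (by simp) (by simp (disch := decide) [h0, h3.symm, hij.symm, hci.adj]))
      (by decide)
  · exact absurd (length_add_two_le_of_isChain hlong hci.1 hxy hx hy (ks := [0, 5, 1, 2, 3])
      (by decide) (by simp) (by simp (disch := decide) [h0, h3.symm, hij.symm, hci.adj]))
      (by decide)
  · exact absurd (length_add_two_le_of_isChain hlong hci.1 hxy hx hy (ks := [0, 1, 2, 4, 3])
      (by decide) (by simp) (by simp (disch := decide) [h0, h3.symm, hij, hci.adj]))
      (by decide)
  · exact absurd (length_add_two_le_of_isChain hlong hci.1 hxy hx hy (ks := [0, 1, 2, 5, 4, 3])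
      (by decide) (by simp) (by simp (disch := decide) [h0, h3.symm, hij, hci.adj]))
      (by decide)

lemma IsCycleLabelling.eq_or_eq_add_three_of_adj {a b : ZMod 6} (hxa : G.Adj x (ci a))
    (hyb : G.Adj y (ci b)) : b = a ∨ b = a + 3 := by
  have key : ∀ {x y : V} {a d : ZMod 6}, G.Adj x y → (∀ k, ci k ≠ x) → (∀ k, ci k ≠ y) →
      G.Adj x (ci a) → G.Adj y (ci (a + d)) → ¬ (d = 1 ∨ d = 2) :=
    fun hxy hx hy hxa hyd hd => (hci.add_left _).not_adj_of_adj_zero hlong hxy (fun _ => hx _)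
      (fun _ => hy _) (by simpa using hxa) hd hyd
  obtain ⟨d, rfl⟩ : ∃ d, b = a + d := ⟨b - a, by ring⟩
  -- exchanging the roles of `x` and `y` turns the offset `d` into `-d`
  have h₁ := key hxy hx hy hxa hyb
  have h₂ := key hxy.symm hy hx hyb (d := -d) (by simpa using hxa)
  have : ∀ d : ZMod 6, ¬ (d = 1 ∨ d = 2) → ¬ (-d = 1 ∨ -d = 2) → d = 0 ∨ d = 3 := by decide
  rcases this d h₁ h₂ with rfl | rfl <;> simp

lemma OneTough.false_of_hexagon_cross [Fintype V] (ht : OneTough G)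
    (hcover : ∀ v, v = x ∨ v = y ∨ ∃ k, ci k = v)
    (hxN : ∀ k, G.Adj x (ci k) → k = 0 ∨ k = 3) (hyN : ∀ k, G.Adj y (ci k) → k = 0 ∨ k = 3)
    (h0 : G.Adj x (ci 0)) (h3 : G.Adj y (ci 3)) : False := by
  classical
  set S : Finset V := {ci 0, ci 3}
  have hS : ∀ k, ci k ∈ S ↔ k = 0 ∨ k = 3 := by simp [S, hci.1.eq_iff]
  have hK : Separates G S {x, y} := by
    refine separates_pair (fun w hw => ?_) (fun w hw => ?_) <;>
      rcases hcover w with rfl | rfl | ⟨k, rfl⟩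
    exacts [absurd hw G.irrefl, Or.inl rfl, Or.inr ((hS k).2 (hxN k hw)), Or.inl rfl,
      absurd hw G.irrefl, Or.inr ((hS k).2 (hyN k hw))]
  have hL : Separates G S (ci '' {1, 2}) := by
    rintro - w - hw hvw ⟨i, hi, rfl⟩
    rcases hcover w with rfl | rfl | ⟨j, rfl⟩
    · rcases hxN i hvw.symm with rfl | rfl <;> exact absurd hi (by decide)
    · rcases hyN i hvw.symm with rfl | rfl <;> exact absurd hi (by decide)
    · rw [Finset.mem_coe, hS] at hw
      rw [hci.1.mem_set_image]
      by_contra hj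
      have hj' : j = 4 ∨ j = 5 := by revert hj hw; clear hvw; revert j; decide
      exact hci.not_adj_chord hlong hxy hx hy h0 h3 (by simpa using hi) hj' hvw
  have := ht.three_le_card hK hL (a := x) (b := ci 1) (c := ci 4) (by simp [S, Ne.symm (hx _)])
    (by rw [hS]; decide) (by rw [hS]; decide) (by simp) (by simp [hx, hy]) (by simp [hx, hy])
    (by simp) (by rw [hci.1.mem_set_image]; decide)
  have : S.card ≤ 2 := Finset.card_le_two
  omega

lemma OneTough.false_of_hexagon [Fintype V] (ht : OneTough G)
    (hcover : ∀ v, v = x ∨ v = y ∨ ∃ k, ci k = v) (h0 : G.Adj x (ci 0)) {b : ZMod 6}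
    (hyb : G.Adj y (ci b)) : False := by
  classical
  have hyN : ∀ k, G.Adj y (ci k) → k = 0 ∨ k = 3 := fun k hk => by
    simpa using hci.eq_or_eq_add_three_of_adj hlong hxy hx hy h0 hk
  have hxN : ∀ k, G.Adj x (ci k) → k = 0 ∨ k = 3 := fun k hk => by
    have := hci.eq_or_eq_add_three_of_adj hlong hxy.symm hy hx hyb hk
    rcases hyN b hyb with rfl | rfl
    · simpa using this
    · rcases this with h | h
      exacts [Or.inr h, Or.inl (h.trans (by decide))]
  by_cases hy3 : G.Adj y (ci 3)
  · exact ht.false_of_hexagon_cross hci hlong hxy hx hy hcover hxN hyN h0 hy3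
  by_cases hx3 : G.Adj x (ci 3)
  · have hy0 : G.Adj y (ci 0) := by
      rcases hyN b hyb with rfl | rfl
      exacts [hyb, absurd hyb hy3]
    exact ht.false_of_hexagon_cross hci hlong hxy.symm hy hx (fun v => by have := hcover v; tauto)
      hyN hxN hy0 hx3
  -- now `ci 0` is a cut vertex
  have hK : Separates G ({ci 0} : Finset V) {x, y} := by
    refine separates_pair (fun w hw => ?_) (fun w hw => ?_) <;>
      rcases hcover w with rfl | rfl | ⟨k, rfl⟩
    · exact absurd hw G.irrefl
    · exact Or.inl rfl
    · rcases hxN k hw with rfl | rfl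
      exacts [Or.inr (by simp), absurd hw hx3]
    · exact Or.inl rfl
    · exact absurd hw G.irrefl
    · rcases hyN k hw with rfl | rfl
      exacts [Or.inr (by simp), absurd hw hy3]
  have := ht.two_le_card hK (a := x) (b := ci 1) (by simp [Ne.symm (hx _)])
    (by simp [hci.1.eq_iff]; decide) (by simp) (by simp [hx, hy])
  simp at this

end Hexagon

def outsideComponent (G : SimpleGraph V) (X : Set V) (a : V) : Set V :=
  {v | ∃ w : G.Walk a v, ∀ z ∈ w.support, z ∉ X}

namespace outsideComponent
variable {X : Set V} {a : V}

lemma self_mem (ha : a ∉ X) : a ∈ outsideComponent G X a :=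
  ⟨.nil, by simpa using ha⟩

lemma notMem {v : V} (hv : v ∈ outsideComponent G X a) : v ∉ X := by
  obtain ⟨w, hw⟩ := hv
  exact hw v w.end_mem_support

lemma mem_of_adj {v w : V} (hv : v ∈ outsideComponent G X a) (hvw : G.Adj v w) (hw : w ∉ X) :
    w ∈ outsideComponent G X a := by
  obtain ⟨W, hW⟩ := hv
  refine ⟨W.concat hvw, fun z hz => ?_⟩
  rw [Walk.support_concat, List.mem_append, List.mem_singleton] at hz
  rcases hz with hz | rfl
  exacts [hW z hz, hw]

lemma exists_isPath [DecidableEq V] {h h' : V} (hh : h ∈ outsideComponent G X a)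
    (hh' : h' ∈ outsideComponent G X a) :
    ∃ R : G.Walk h h', R.IsPath ∧ ∀ z ∈ R.support, z ∉ X := by
  obtain ⟨W, hW⟩ := hh
  obtain ⟨W', hW'⟩ := hh'
  refine ⟨(W.reverse.append W').bypass, Walk.bypass_isPath _, fun z hz => ?_⟩
  rcases (Walk.mem_support_append_iff _ _).1 (Walk.support_bypass_subset_support _ hz) with hz | hz
  exacts [hW z (by simpa using hz), hW' z hz]

end outsideComponent

lemma OneTough.exists_two_attachments [Fintype V] (ht : OneTough G) {u : V} {c : G.Walk u u}
    (hc : c.IsCycle) {a : V} (ha : a ∉ c.support) :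
    ∃ s ∈ c.support, ∃ t ∈ c.support, s ≠ t ∧
      (∃ h ∈ outsideComponent G {v | v ∈ c.support} a, G.Adj s h) ∧
      ∃ h ∈ outsideComponent G {v | v ∈ c.support} a, G.Adj t h := by
  classical
  set H := outsideComponent G {v | v ∈ c.support} a
  set A := c.support.toFinset.filter fun s => ∃ h ∈ H, G.Adj s h
  suffices hA : 2 ≤ A.card by
    obtain ⟨s, hs, t, ht, hst⟩ := Finset.one_lt_card.1 hA
    simp only [A, Finset.mem_filter, List.mem_toFinset] at hs ht
    exact ⟨s, hs.1, t, ht.1, hst, hs.2, ht.2⟩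
  by_contra! hA
  obtain ⟨w, hw, hwA⟩ := Finset.exists_mem_notMem_of_card_lt_card (s := A)
    (t := c.support.tail.toFinset)
    (by rw [hc.card_toFinset_support_tail]; have := hc.three_le_length; omega)
  have hwc : w ∈ c.support := List.mem_of_mem_tail (List.mem_toFinset.1 hw)
  have hK : Separates G A H := by
    intro v w _ hwA hvw hv
    by_cases hwc : w ∈ c.support
    · exact absurd (Finset.mem_filter.2 ⟨List.mem_toFinset.2 hwc, v, hv, hvw.symm⟩) hwA
    · exact outsideComponent.mem_of_adj hv hvw hwc
  have := ht.two_le_card hK (a := a) (b := w) (by simp [A, ha]) hwA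
    (outsideComponent.self_mem ha) (fun h => outsideComponent.notMem h hwc)
  omega

lemma IsLongestCycle.eq_of_adj_of_length_lt_six [DecidableEq V] {u : V} {c : G.Walk u u}
    (hc : IsLongestCycle c) (h6 : c.length < 6) {a s t h h' : V} (hs : s ∈ c.support)
    (ht : t ∈ c.support) (hst : s ≠ t) (hh : h ∈ outsideComponent G {v | v ∈ c.support} a)
    (hh' : h' ∈ outsideComponent G {v | v ∈ c.support} a) (hsh : G.Adj s h)
    (hth : G.Adj t h') : h = h' := by
  obtain ⟨R, hR, hRc⟩ := outsideComponent.exists_isPath hh hh'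
  have hW : ((Walk.cons hsh R).concat hth.symm).IsPath :=
    (hR.cons fun hsR => hRc s hsR hs).concat
      (by simpa [Ne.symm hst] using fun htR => hRc t htR ht) _
  have hWc : ∀ z ∈ ((Walk.cons hsh R).concat hth.symm).support, z ∈ c.support →
      z = s ∨ z = t := by
    intro z hz hzc
    simp only [Walk.support_concat, Walk.support_cons, List.cons_append, List.mem_cons,
      List.mem_append, List.not_mem_nil, or_false] at hz
    rcases hz with rfl | hz | rfl
    exacts [Or.inl rfl, absurd hzc (hRc z hz), Or.inr rfl]
  have := hc.two_mul_length_le hs ht hst hW hWc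
  simp only [Walk.length_concat, Walk.length_cons] at this
  exact Walk.eq_of_length_eq_zero (p := R) (by omega)

theorem OneTough.six_le_length [Fintype V] (ht : OneTough G) {u : V} {c : G.Walk u u}
    (hc : IsLongestCycle c) {a b : V} (hab : G.Adj a b) (ha : a ∉ c.support)
    (hb : b ∉ c.support) : 6 ≤ c.length := by
  classical
  by_contra! h6
  set H := outsideComponent G {v | v ∈ c.support} a
  obtain ⟨s, hs, t, hts, hst, ⟨h₀, hh₀, hsh₀⟩, ⟨h₁, hh₁, hth₁⟩⟩ := ht.exists_two_attachments hc.1 ha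
  have hthrough : ∀ s' ∈ c.support, ∀ h ∈ H, G.Adj s' h → h = h₀ := by
    intro s' hs' h hh hs'h
    by_cases hs's : s' = s
    · subst hs's
      rw [hc.eq_of_adj_of_length_lt_six h6 hs' hts hst hh hh₁ hs'h hth₁,
        hc.eq_of_adj_of_length_lt_six h6 hs' hts hst hh₀ hh₁ hsh₀ hth₁]
    · exact hc.eq_of_adj_of_length_lt_six h6 hs' hs hs's hh hh₀ hs'h hsh₀
  have hK : Separates G ({h₀} : Finset V) (H \ {h₀}) := by
    rintro v w - hw hvw ⟨hv, hv₀⟩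
    have hw₀ : w ∉ ({h₀} : Set V) := by simpa using hw
    by_cases hwc : w ∈ c.support
    · exact absurd (hthrough w hwc v hv hvw.symm) hv₀
    · exact ⟨outsideComponent.mem_of_adj hv hvw hwc, hw₀⟩
  have hu : u ∉ H := fun huH => outsideComponent.notMem huH c.start_mem_support
  obtain ⟨x, hxH, hx₀⟩ : ∃ x ∈ H, x ≠ h₀ := by
    by_cases ha₀ : a = h₀
    · exact ⟨b, outsideComponent.mem_of_adj (outsideComponent.self_mem ha) hab hb,
        ha₀ ▸ hab.ne.symm⟩
    · exact ⟨a, outsideComponent.self_mem ha, ha₀⟩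
  have := ht.two_le_card hK (a := x) (b := u) (by simpa using hx₀)
    (by simpa using fun h : u = h₀ => hu (h ▸ hh₀)) ⟨hxH, hx₀⟩ (fun h => hu h.1)
  simp at this

lemma exists_adj_ne [Fintype V] [DecidableRel G.Adj] {v : V} (hv : 2 ≤ G.degree v) (w : V) :
    ∃ z, G.Adj v z ∧ z ≠ w := by
  obtain ⟨z, hz, hzw⟩ := Finset.exists_mem_ne (s := G.neighborFinset v)
    (by rw [card_neighborFinset_eq_degree]; omega) w
  exact ⟨z, (mem_neighborFinset G v z).1 hz, hzw⟩

theorem OneTough.false_of_adj_outside [Fintype V] [DecidableRel G.Adj] (ht : OneTough G)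
    (hδ : ∀ v, 2 ≤ G.degree v) (hn : Fintype.card V ≤ 8) {u : V} {c : G.Walk u u}
    (hc : IsLongestCycle c) (h6 : 6 ≤ c.length) {x y : V} (hxy : G.Adj x y)
    (hx : x ∉ c.support) (hy : y ∉ c.support) : False := by
  classical
  set T := c.support.tail.toFinset ∪ {x, y}
  have hT : T.card = c.length + 2 := hc.1.card_toFinset_support_tail_union hxy.ne hx hy
  have hTV := Finset.card_le_univ T
  have hlen : c.length = 6 := by omega
  have hcover : ∀ v, v ∈ c.support ∨ v = x ∨ v = y := by
    intro v
    have hv : v ∈ T := Finset.eq_univ_of_card T (by omega) ▸ Finset.mem_univ v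
    simp only [T, Finset.mem_union, List.mem_toFinset, Finset.mem_insert,
      Finset.mem_singleton] at hv
    exact hv.imp_left List.mem_of_mem_tail
  set ci := fun k : ZMod 6 => c.getVert k.val
  have hci : IsCycleLabelling G ci := hc.1.isCycleLabelling_getVert hlen
  have hcx : ∀ k, ci k ≠ x := fun k h => hx (h ▸ c.getVert_mem_support _)
  have hcy : ∀ k, ci k ≠ y := fun k h => hy (h ▸ c.getVert_mem_support _)
  have hcover' : ∀ v, v = x ∨ v = y ∨ ∃ k, ci k = v := fun v => by
    rcases hcover v with hv | hv | hv
    exacts [Or.inr (Or.inr (c.exists_getVert_zmod_eq hlen hv)), Or.inl hv, Or.inr (Or.inl hv)]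
  have hattach : ∀ {v w : V}, (∀ z, z = v ∨ z = w ∨ ∃ k, ci k = z) → ∃ k, G.Adj v (ci k) := by
    intro v w hvw
    obtain ⟨z, hvz, hzw⟩ := exists_adj_ne (hδ v) w
    rcases hvw z with rfl | rfl | ⟨k, rfl⟩
    exacts [absurd hvz G.irrefl, absurd rfl hzw, ⟨k, hvz⟩]
  obtain ⟨a, hxa⟩ := hattach hcover'
  obtain ⟨b, hyb⟩ := hattach (v := y) (w := x) fun z => by have := hcover' z; tauto
  have hlong : ∀ v (d : G.Walk v v), d.IsCycle → d.length ≤ 6 := fun v d hd => hlen ▸ hc.2 v d hd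
  refine ht.false_of_hexagon (hci.add_left a) hlong hxy (fun k => hcx _) (fun k => hcy _)
    (fun v => ?_) (by simpa using hxa) (b := b - a) (by simpa using hyb)
  rcases hcover' v with h | h | ⟨k, rfl⟩
  exacts [Or.inl h, Or.inr (Or.inl h), Or.inr (Or.inr ⟨k - a, by simp⟩)]

end

theorem stmt_10_general [Fintype V] (G : SimpleGraph V) [DecidableRel G.Adj]
    (ht : OneTough G) (hδ : G.minDegree = 2) (hn : Fintype.card V ≤ 8) :
    (∀ (u : V) (c : G.Walk u u), IsLongestCycle c → 6 ≤ c.length →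
      ∀ (x y : V) (P : G.Walk x y), IsLongestPathOutside c P → 1 ≤ P.length → False) ∧
    ∀ (u : V) (c : G.Walk u u), IsLongestCycle c → IsDominating c := by
  have hδ' : ∀ v, 2 ≤ G.degree v := fun v => hδ ▸ G.minDegree_le_degree v
  refine ⟨fun u c hc h6 x y P hP hP1 => ?_, fun u c hc a b hab => ?_⟩
  · have hP0 := P.adj_getVert_succ (i := 0) (by omega)
    rw [P.getVert_zero] at hP0
    exact ht.false_of_adj_outside hδ' hn hc h6 hP0 (hP.2.1 x P.start_mem_support)
      (hP.2.1 _ (P.getVert_mem_support 1))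
  · by_contra! h
    exact ht.false_of_adj_outside hδ' hn hc (ht.six_le_length hc hab h.1 h.2) hab h.1 h.2

theorem stmt_10 [Fintype V] [DecidableEq V] (G : SimpleGraph V) [DecidableRel G.Adj]
    (ht : OneTough G) (hδ : G.minDegree = 2) (hn : Fintype.card V ≤ 8) :
    (∀ (u : V) (c : G.Walk u u), IsLongestCycle c → 6 ≤ c.length →
      ∀ (x y : V) (P : G.Walk x y), IsLongestPathOutside c P → 1 ≤ P.length → False) ∧
    ∀ (u : V) (c : G.Walk u u), IsLongestCycle c → IsDominating c :=
  stmt_10_general G ht hδ hn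
end Paper
end

section
/- Let G be a graph, C a longest cycle, and P = x…y a longest path in G \ C of length p ≥ 0. Let ξ₁,…,ξ_s be the vertices of N_C(x) ∪ N_C(y) in cyclic order, with elementary segments I_i. Then every elementary segment has length at least 2; moreover, if an elementary segment I_i has an endpoint in N_C(x) ∩ N_C(y), or one endpoint in N_C(x) \ N_C(y) and the other in N_C(y) \ N_C(x), then |I_i| ≥ p + 2. -/
open SimpleGraph Finset

namespace SimpleGraph.Walk

variable {V : Type*} {G : SimpleGraph V}

theorem IsTrail.edges_subset_of_cons_subset {u v w w' : V} {h : G.Adj u v} {p : G.Walk v w}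
    {q : G.Walk v w'} (hp : (cons h p).IsTrail) (hsub : (cons h p).edges ⊆ (cons h q).edges) :
    p.edges ⊆ q.edges := fun e he =>
  (List.mem_cons.mp (hsub (List.mem_cons_of_mem _ he))).resolve_left
    (by rintro rfl; exact ((isTrail_cons _ _).mp hp).2 he)

theorem IsPath.exists_eq_append_of_edges_subset_s12 {v b w : V} {I : G.Walk v b} {Q : G.Walk v w}
    (hI : I.IsTrail) (hQ : Q.IsPath) (hsub : I.edges ⊆ Q.edges) :
    ∃ J : G.Walk b w, Q = I.append J := by
  induction I with
  | nil => exact ⟨Q, rfl⟩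
  | @cons v v' b h I' ih =>
    cases Q with
    | nil => simp at hsub
    | @cons _ q _ _ Q' =>
      rw [cons_isPath_iff] at hQ
      have hvv' : s(v, v') ∈ s(v, q) :: Q'.edges := hsub (by simp)
      obtain rfl : v' = q := by
        rcases List.mem_cons.mp hvv' with hfirst | hlater
        · exact Sym2.congr_right.mp hfirst
        · exact absurd (Q'.fst_mem_support_of_mem_edges hlater) hQ.2
      obtain ⟨J, rfl⟩ := ih hI.of_cons hQ.1 (hI.edges_subset_of_cons_subset hsub)
      exact ⟨J, rfl⟩

theorem IsCycle.exists_eq_append_of_snd_eq {a b : V} {d : G.Walk a a} (hd : d.IsCycle)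
    {I : G.Walk a b} (hI : I.IsTrail) (hI_nil : ¬ I.Nil) (hsub : I.edges ⊆ d.edges)
    (hsnd : I.snd = d.snd) : ∃ J : G.Walk b a, d = I.append J := by
  cases I with
  | nil => simp at hI_nil
  | cons h I' =>
    cases d with
    | nil => simp at hd
    | cons _ d' =>
      simp only [snd_cons] at hsnd
      subst hsnd
      obtain ⟨J, rfl⟩ := ((cons_isCycle_iff _ _).mp hd).1.exists_eq_append_of_edges_subset_s12
        hI.of_cons (hI.edges_subset_of_cons_subset hsub)
      exact ⟨J, rfl⟩

theorem IsCycle.exists_isPath_complement [DecidableEq V] {u a b : V} {c : G.Walk u u}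
    (hc : c.IsCycle) {I : G.Walk a b} (hI : I.IsTrail) (hI_nil : ¬ I.Nil)
    (hsub : I.edges ⊆ c.edges) :
    ∃ J : G.Walk b a, J.IsPath ∧ I.length + J.length = c.length ∧ J.support ⊆ c.support := by
  have ha : a ∈ c.support :=
    c.fst_mem_support_of_mem_edges (hsub (mk_start_snd_mem_edges hI_nil))
  set c' := c.rotate a ha
  have hsub' : I.edges ⊆ c'.edges := fun e he => (c.rotate_edges a ha).mem_iff.mpr (hsub he)
  have of_snd_eq : ∀ d : G.Walk a a, d.IsCycle → d.length = c.length →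
      d.support ⊆ c.support → I.edges ⊆ d.edges → I.snd = d.snd → ∃ J : G.Walk b a,
        J.IsPath ∧ I.length + J.length = c.length ∧ J.support ⊆ c.support := by
    intro d hd hlen hsupp hsub hsnd
    obtain ⟨J, rfl⟩ := hd.exists_eq_append_of_snd_eq hI hI_nil hsub hsnd
    exact ⟨J, hd.isPath_of_append_right hI_nil, length_append I J ▸ hlen,
      fun v hv => hsupp ((mem_support_append_iff I J).mpr (Or.inr hv))⟩
  have hc' : c'.IsCycle := hc.rotate ha
  have hsupp' : c'.support ⊆ c.support := fun v hv => (c.mem_support_rotate_iff a ha).mp hv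
  -- the first edge of `I` is one of the two edges of `c'` at `a`: follow `c'` or its reversal
  have hnbr : I.snd ∈ c'.toSubgraph.neighborSet a :=
    adj_toSubgraph_iff_mem_edges.mpr (hsub' (mk_start_snd_mem_edges hI_nil))
  rw [hc'.neighborSet_toSubgraph_endpoint] at hnbr
  rcases hnbr with hsnd | hpen
  · exact of_snd_eq c' hc' (c.length_rotate a ha) hsupp' hsub' hsnd
  · refine of_snd_eq c'.reverse hc'.reverse (by simp [c']) ?_ ?_ (by rw [snd_reverse, hpen])
    · simpa only [support_reverse, List.reverse_subset] using hsupp'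
    · simpa only [edges_reverse, List.subset_reverse] using hsub'

end SimpleGraph.Walk

namespace Paper

variable {V : Type*}

section

variable {G : SimpleGraph V}

theorem IsLongestCycle.length_add_two_le_s12 {u a b x y : V} {c : G.Walk u u}
    (hc : IsLongestCycle c) {I : G.Walk a b} (hI : I.IsPath) (hI_nil : ¬ I.Nil)
    (hsub : I.edges ⊆ c.edges) {Q : G.Walk x y} (hQ : Q.IsPath) (hQc : AvoidsCycle c Q)
    (hax : G.Adj a x) (hyb : G.Adj y b) : Q.length + 2 ≤ I.length := by
  classical
  obtain ⟨J, hJ, hlen, hJc⟩ := hc.1.exists_isPath_complement hI.isTrail hI_nil hsub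
  have hab : a ≠ b := fun h => hI_nil ((hI.nil_iff_eq).mpr h)
  have ha : a ∈ c.support := hJc J.end_mem_support
  have hb : b ∈ c.support := hJc J.start_mem_support
  let N : G.Walk a b := Walk.cons hax (Q.concat hyb)
  have hN : N.IsPath := by
    refine (hQ.concat (fun hb' => hQc b hb' hb) hyb).cons ?_
    rw [Walk.support_concat, List.mem_append, List.mem_singleton]
    exact fun h => h.elim (fun ha' => hQc a ha' ha) hab
  have hdisj : N.support.tail.Disjoint J.support.tail := by
    rw [Walk.support_cons, List.tail_cons, Walk.support_concat]
    intro v hvN hvJ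
    rcases List.mem_append.mp hvN with hvQ | hvb
    · exact hQc v hvQ (hJc (List.mem_of_mem_tail hvJ))
    · rw [List.mem_singleton.mp hvb] at hvJ
      exact (List.nodup_cons.mp (J.cons_tail_support ▸ hJ.support_nodup)).1 hvJ
  have hcycle := hc.2 a _ (hN.isCycle_append hJ hdisj (Or.inl (by simp [N])))
  simp only [Walk.length_append, N, Walk.length_cons, Walk.length_concat] at hcycle
  omega

variable [Fintype V] [DecidableEq V] [DecidableRel G.Adj]

theorem length_add_two_le_of_mem_NC {u a b x y : V} {c : G.Walk u u} (hc : IsLongestCycle c)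
    {I : G.Walk a b} (hI : I.IsPath) (hI_len : 1 ≤ I.length) (hsub : I.edges ⊆ c.edges)
    {Q : G.Walk x y} (hQ : Q.IsPath) (hQc : AvoidsCycle c Q)
    (ha : a ∈ NC G c x) (hb : b ∈ NC G c y) : Q.length + 2 ≤ I.length :=
  hc.length_add_two_le_s12 hI (Walk.not_nil_iff_lt_length.mpr hI_len) hsub hQ hQc
    ((mem_neighborFinset _ _ _).mp (mem_filter.mp ha).1).symm
    ((mem_neighborFinset _ _ _).mp (mem_filter.mp hb).1)

end

theorem stmt_12 [Fintype V] [DecidableEq V] (G : SimpleGraph V) [DecidableRel G.Adj]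
    {u x y : V} (c : G.Walk u u) (P : G.Walk x y)
    (hc : IsLongestCycle c) (hP : IsLongestPathOutside c P)
    {a b : V} (I : G.Walk a b)
    (hI : IsSegment c (NC G c x ∪ NC G c y) I) :
    2 ≤ I.length ∧
    ((a ∈ NC G c x ∩ NC G c y ∨ b ∈ NC G c x ∩ NC G c y ∨
      (a ∈ NC G c x \ NC G c y ∧ b ∈ NC G c y \ NC G c x) ∨
      (a ∈ NC G c y \ NC G c x ∧ b ∈ NC G c x \ NC G c y)) →
      P.length + 2 ≤ I.length) := by
  obtain ⟨hIp, hIlen, haA, hbA, -, hsub, -⟩ := hI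
  obtain ⟨hPp, hPc, -⟩ := hP
  have nil_avoids {v : V} (hv : v ∈ P.support) : AvoidsCycle c (Walk.nil : G.Walk v v) := by
    intro w hw
    rw [Walk.support_nil, List.mem_singleton] at hw
    exact hw ▸ hPc v hv
  have hPc' : AvoidsCycle c P.reverse := fun v hv =>
    hPc v (by simpa only [Walk.support_reverse, List.mem_reverse] using hv)
  have cross : (a ∈ NC G c x ∧ b ∈ NC G c y) ∨ (a ∈ NC G c y ∧ b ∈ NC G c x) →
      P.length + 2 ≤ I.length := by
    rintro (⟨ha, hb⟩ | ⟨ha, hb⟩)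
    · exact length_add_two_le_of_mem_NC hc hIp hIlen hsub hPp hPc ha hb
    · simpa using length_add_two_le_of_mem_NC hc hIp hIlen hsub hPp.reverse hPc' ha hb
  refine ⟨?_, fun h => cross ?_⟩
  · rcases mem_union.mp haA with ha | ha <;> rcases mem_union.mp hbA with hb | hb
    · exact length_add_two_le_of_mem_NC hc hIp hIlen hsub .nil
        (nil_avoids P.start_mem_support) ha hb
    · linarith [cross (Or.inl ⟨ha, hb⟩)]
    · linarith [cross (Or.inr ⟨ha, hb⟩)]
    · exact length_add_two_le_of_mem_NC hc hIp hIlen hsub .nil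
        (nil_avoids P.end_mem_support) ha hb
  · simp only [mem_inter, mem_sdiff, mem_union] at h haA hbA
    tauto
end Paper
end

section
/- For every graph G in the exceptional class 𝔉₂ (where H₅ ⊆ G ⊆ H₅ + {y₁y₃, y₂y₃, zx₁}, with H₅ built from three disjoint 4-vertex graphs H₁, H₂, H₃ with x_i, y_i ∈ V(H_i) by identifying x₁, x₂, x₃ and adding edges zy₁, zy₂, zy₃, y₁y₂ for an extra vertex z, and δ(G) = 3), one has κ(G) = 2, τ(G) = 1, and no longest cycle of G is a dominating cycle. -/
open SimpleGraph Finset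

namespace Paper

variable {V : Type*}

/-!
Minimum degree 3 forces the two vertices `a_i`, `b_i` of `H_i` other than `x`, `y_i` to be adjacent
to exactly the other three vertices of `H_i`. A dominating cycle meets every edge `a_i b_i`; it
cannot close up inside the triangle `y_i a_i b_i`, so for each `i` it has an edge from `x` into
`H_i`, which is three cycle edges at `x`. The pair `{x, y₁}` separates `{a₁, b₁}` from `z`; the
bound `s(G - S) ≤ |S|` for cutsets is a case analysis on whether `x` and `z` lie in `S`, and it also
shows that no single vertex disconnects `G`.
-/

section MinDegree

variable [Fintype V] {G : SimpleGraph V} [DecidableRel G.Adj]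

theorem neighborSet_eq_sdiff_of_subset {A : Set V} {v : V} (hv : v ∈ A)
    (hsub : G.neighborSet v ⊆ A) (hA : A.ncard ≤ G.minDegree + 1) :
    G.neighborSet v = A \ {v} := by
  refine Set.eq_of_subset_of_ncard_le (fun w hw => ⟨hsub hw, (G.ne_of_adj hw).symm⟩) ?_
  rw [Set.ncard_sdiff_singleton_of_mem hv, ← Nat.card_coe_set_eq (G.neighborSet v),
    Nat.card_eq_fintype_card, card_neighborSet_eq_degree]
  have := G.minDegree_le_degree v
  omega

theorem exists_eq_of_ncard_eq_four {A : Set V} {x w : V} (hA : A.ncard = 4)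
    (hδ : G.minDegree = 3) (hx : x ∈ A) (hw : w ∈ A) (hxw : x ≠ w)
    (hsub : ∀ v ∈ A, v ≠ x → v ≠ w → G.neighborSet v ⊆ A) :
    ∃ a b, A = {x, w, a, b} ∧ G.neighborSet a = {x, w, b} ∧ G.neighborSet b = {x, w, a} := by
  obtain ⟨a, b, hab, hAab⟩ : ∃ a b, a ≠ b ∧ A \ {x, w} = {a, b} := by
    rw [← Set.ncard_eq_two, Set.ncard_sdiff (by simp [Set.insert_subset_iff, hx, hw]), hA,
      Set.ncard_pair hxw]
  have hmem {v : V} : v ∈ A ↔ v = x ∨ v = w ∨ v = a ∨ v = b := by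
    have := congrArg (v ∈ ·) hAab
    simp only [Set.mem_sdiff, Set.mem_insert_iff, Set.mem_singleton_iff, eq_iff_iff] at this
    by_cases hv : v = x ∨ v = w
    · rcases hv with rfl | rfl <;> simp [hx, hw]
    · tauto
  have hN {v v' : V} (hv : v = a ∨ v = b) (hv' : v' = a ∨ v' = b) (hvv' : v ≠ v') :
      G.neighborSet v = {x, w, v'} := by
    have hvA : v ∈ A \ {x, w} := by rw [hAab]; simpa using hv
    simp only [Set.mem_sdiff, Set.mem_insert_iff, Set.mem_singleton_iff, not_or] at hvA
    rw [neighborSet_eq_sdiff_of_subset hvA.1 (hsub v hvA.1 hvA.2.1 hvA.2.2) (by omega)]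
    ext u
    simp only [Set.mem_sdiff, Set.mem_insert_iff, Set.mem_singleton_iff, hmem]
    grind
  exact ⟨a, b, Set.ext fun v => by simp [hmem], hN (.inl rfl) (.inr rfl) hab,
    hN (.inr rfl) (.inl rfl) hab.symm⟩

end MinDegree

section Cycles

variable {G : SimpleGraph V}

theorem _root_.SimpleGraph.Walk.support_subset_of_closed {u v : V} (w : G.Walk u v) {K : Set V}
    (hu : u ∈ K) (hK : ∀ p q, s(p, q) ∈ w.edges → p ∈ K → q ∈ K) : ∀ t ∈ w.support, t ∈ K := by
  induction w with
  | nil => simpa using hu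
  | cons h w ih =>
    simp only [Walk.support_cons, List.mem_cons, forall_eq_or_imp]
    refine ⟨hu, ih (hK _ _ (by simp) hu) fun p q hpq => hK p q (by simp [hpq])⟩

theorem _root_.SimpleGraph.Walk.support_subset_of_closed_of_mem [DecidableEq V] {u t : V}
    (c : G.Walk u u) (ht : t ∈ c.support) {K : Set V} (htK : t ∈ K)
    (hK : ∀ p q, s(p, q) ∈ c.edges → p ∈ K → q ∈ K) : ∀ v ∈ c.support, v ∈ K := by
  intro v hv
  refine (c.rotate t ht).support_subset_of_closed htK (fun p q hpq => hK p q ?_) v (by simpa)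
  exact (c.rotate_edges t ht).mem_iff.mp hpq

theorem _root_.SimpleGraph.Walk.mem_support_of_mem_neighborSet_toSubgraph {u v p q : V}
    {w : G.Walk u v} (h : q ∈ w.toSubgraph.neighborSet p) : q ∈ w.support :=
  w.mem_verts_toSubgraph.mp h.snd_mem

theorem _root_.SimpleGraph.Walk.IsCycle.ncard_neighborSet_toSubgraph_le_two {u : V}
    {c : G.Walk u u} (hc : c.IsCycle) (v : V) : (c.toSubgraph.neighborSet v).ncard ≤ 2 := by
  by_cases hv : v ∈ c.support
  · exact (hc.ncard_neighborSet_toSubgraph_eq_two hv).le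
  · suffices c.toSubgraph.neighborSet v = ∅ by simp [this]
    refine Set.eq_empty_of_forall_notMem fun w hw => hv ?_
    exact c.mem_verts_toSubgraph.mp hw.fst_mem

theorem _root_.SimpleGraph.Walk.IsCycle.neighborSet_toSubgraph_eq_of_subset {u v p q : V}
    {c : G.Walk u u} (hc : c.IsCycle) (hv : v ∈ c.support)
    (h : c.toSubgraph.neighborSet v ⊆ {p, q}) : c.toSubgraph.neighborSet v = {p, q} :=
  Set.eq_of_subset_of_ncard_le h <| by
    rw [hc.ncard_neighborSet_toSubgraph_eq_two hv]; exact (Set.ncard_insert_le p {q}).trans (by simp)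

theorem _root_.SimpleGraph.Walk.IsCycle.support_subset_of_neighborSet_toSubgraph_eq
    [DecidableEq V] {u y a b : V} {c : G.Walk u u} (hc : c.IsCycle) (hab : a ≠ b)
    (ha : a ∈ c.support) (hNa : c.toSubgraph.neighborSet a = {y, b})
    (hNb : c.toSubgraph.neighborSet b = {y, a}) : ∀ v ∈ c.support, v ∈ ({y, a, b} : Set V) := by
  have hNy : c.toSubgraph.neighborSet y = {a, b} := by
    have hsub : {a, b} ⊆ c.toSubgraph.neighborSet y := by
      rintro w (rfl | rfl)
      · exact c.toSubgraph.adj_symm (show y ∈ c.toSubgraph.neighborSet w by simp [hNa])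
      · exact c.toSubgraph.adj_symm (show y ∈ c.toSubgraph.neighborSet w by simp [hNb])
    refine (Set.eq_of_subset_of_ncard_le hsub ?_ c.finite_neighborSet_toSubgraph).symm
    rw [Set.ncard_pair hab]
    exact hc.ncard_neighborSet_toSubgraph_le_two _
  refine c.support_subset_of_closed_of_mem ha (by simp) fun p q hpq hp => ?_
  rw [← Walk.adj_toSubgraph_iff_mem_edges, ← Subgraph.mem_neighborSet] at hpq
  simp only [Set.mem_insert_iff, Set.mem_singleton_iff] at hp
  rcases hp with rfl | rfl | rfl
  all_goals
    simp only [hNy, hNa, hNb, Set.mem_insert_iff, Set.mem_singleton_iff] at hpq ⊢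
    tauto

end Cycles

section Components

variable {G : SimpleGraph V} {S : Set V} {u v w : V}

def ReachableOff (G : SimpleGraph V) (S : Set V) (u v : V) : Prop :=
  ∃ (hu : u ∉ S) (hv : v ∉ S), (G.induce Sᶜ).Reachable ⟨u, hu⟩ ⟨v, hv⟩

theorem ReachableOff.refl (hu : u ∉ S) : ReachableOff G S u u := ⟨hu, hu, .rfl⟩

theorem ReachableOff.symm : ReachableOff G S u v → ReachableOff G S v u
  | ⟨hu, hv, h⟩ => ⟨hv, hu, h.symm⟩

theorem ReachableOff.trans : ReachableOff G S u v → ReachableOff G S v w → ReachableOff G S u w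
  | ⟨hu, _, h⟩, ⟨_, hw, h'⟩ => ⟨hu, hw, h.trans h'⟩

theorem _root_.SimpleGraph.Adj.reachableOff (h : G.Adj u v) (hu : u ∉ S) (hv : v ∉ S) :
    ReachableOff G S u v :=
  ⟨hu, hv, Adj.reachable (by simpa using h)⟩

theorem ReachableOff.mem_of_closed {K : Set V}
    (hK : ∀ p q, G.Adj p q → p ∉ S → q ∉ S → p ∈ K → q ∈ K) (h : ReachableOff G S u v)
    (hu : u ∈ K) : v ∈ K := by
  obtain ⟨_, _, ⟨walk⟩⟩ := h
  suffices ∀ {p q : ↥Sᶜ} (W : (G.induce Sᶜ).Walk p q), (p : V) ∈ K → (q : V) ∈ K from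
    this walk hu
  intro p q W
  induction W with
  | nil => exact id
  | @cons a b _ h _ ih => exact fun ha => ih (hK _ _ h a.2 b.2 ha)

theorem compCount_le_card (T : Finset V) (hT : ∀ v ∉ S, ∃ t ∈ T, ReachableOff G S v t) :
    compCount G S ≤ T.card := by
  classical
  let f : {t : T // (t : V) ∉ S} → (G.induce Sᶜ).ConnectedComponent :=
    fun t => (G.induce Sᶜ).connectedComponentMk ⟨t, t.2⟩
  have hf : Function.Surjective f := by
    rintro ⟨⟨v, hv⟩⟩
    obtain ⟨t, htT, _, ht, hvt⟩ := hT v hv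
    exact ⟨⟨⟨t, htT⟩, ht⟩, ConnectedComponent.sound hvt.symm⟩
  calc compCount G S ≤ Nat.card {t : T // (t : V) ∉ S} := Nat.card_le_card_of_surjective f hf
    _ ≤ Nat.card T := Finite.card_subtype_le _
    _ = T.card := Nat.card_eq_finsetCard T

theorem one_lt_compCount [Finite V] (hu : u ∉ S) (hv : v ∉ S) (h : ¬ ReachableOff G S u v) :
    1 < compCount G S := by
  rw [compCount, Finite.one_lt_card_iff_nontrivial]
  exact ⟨_, _, fun huv => h ⟨hu, hv, ConnectedComponent.exact huv⟩⟩

theorem OneTough.connected_induce_compl [Fintype V] (hG : OneTough G) {S : Finset V}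
    (hS : S.card ≤ 1) (hV : S.card < Fintype.card V) : (G.induce (↑S : Set V)ᶜ).Connected := by
  obtain ⟨r, -, hr⟩ := Finset.exists_mem_notMem_of_card_lt_card (s := S) (t := Finset.univ)
    (by rwa [Finset.card_univ])
  refine (connected_iff _).mpr ⟨fun p q => ?_, ⟨⟨r, hr⟩⟩⟩
  by_contra h
  have hpq := one_lt_compCount (G := G) p.2 q.2 fun ⟨_, _, h'⟩ => h h'
  have := hG S hpq
  omega

end Components

/-- The vertices of `H_i` other than the cut vertex `x`. -/
def block (y a b : Fin 3 → V) (i : Fin 3) : Set V := {y i, a i, b i}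

/-- `a i`, `b i` are the two vertices of `H_i` besides `x` and `y_i`. Only the edges at `a i`, `b i`
are pinned down: the optional edges `y₁y₃`, `y₂y₃`, `zx` and the edges of `H_i` at `y_i` stay free. -/
structure IsF2Frame (G : SimpleGraph V) (x z : V) (y a b : Fin 3 → V) : Prop where
  x_ne_z : x ≠ z
  x_notMem_block : ∀ i, x ∉ block y a b i
  z_notMem_block : ∀ i, z ∉ block y a b i
  disjoint_block : ∀ i j, i ≠ j → Disjoint (block y a b i) (block y a b j)
  eq_or_mem_block : ∀ v, v = x ∨ v = z ∨ ∃ i, v ∈ block y a b i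
  neighborSet_a : ∀ i, G.neighborSet (a i) = {x, y i, b i}
  neighborSet_b : ∀ i, G.neighborSet (b i) = {x, y i, a i}
  adj_z_y : ∀ i, G.Adj z (y i)
  adj_y_zero_one : G.Adj (y 0) (y 1)

namespace IsF2Frame

variable {G : SimpleGraph V} {x z : V} {y a b : Fin 3 → V} (hF : IsF2Frame G x z y a b)
include hF

theorem adj_a_x (i : Fin 3) : G.Adj (a i) x := by
  rw [← mem_neighborSet, hF.neighborSet_a]; simp

theorem adj_b_x (i : Fin 3) : G.Adj (b i) x := by
  rw [← mem_neighborSet, hF.neighborSet_b]; simp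

theorem adj_a_y (i : Fin 3) : G.Adj (a i) (y i) := by
  rw [← mem_neighborSet, hF.neighborSet_a]; simp

theorem adj_b_y (i : Fin 3) : G.Adj (b i) (y i) := by
  rw [← mem_neighborSet, hF.neighborSet_b]; simp

theorem adj_a_b (i : Fin 3) : G.Adj (a i) (b i) := by
  rw [← mem_neighborSet, hF.neighborSet_a]; simp

theorem eq_or_adj_of_mem_block {i : Fin 3} {v w : V} (hv : v ∈ block y a b i)
    (hw : w ∈ block y a b i) : v = w ∨ G.Adj v w := by
  simp only [block, Set.mem_insert_iff, Set.mem_singleton_iff] at hv hw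
  have := hF.adj_a_y i; have := hF.adj_b_y i; have := hF.adj_a_b i
  rcases hv with rfl | rfl | rfl <;> rcases hw with rfl | rfl | rfl <;> simp_all [G.adj_comm]

theorem ne_of_mem_block {i j : Fin 3} {v w : V} (hv : v ∈ block y a b i)
    (hw : w ∈ block y a b j) (hij : i ≠ j) : v ≠ w := by
  rintro rfl
  exact Set.disjoint_left.mp (hF.disjoint_block i j hij) hv hw

theorem injective_of_mem_block {f : Fin 3 → V} (hf : ∀ i, f i ∈ block y a b i) :
    Function.Injective f := fun i j h => by
  by_contra hij
  exact hF.ne_of_mem_block (hf i) (hf j) hij h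

theorem y_injective : Function.Injective y := hF.injective_of_mem_block (by simp [block])

theorem a_injective : Function.Injective a := hF.injective_of_mem_block (by simp [block])

theorem b_injective : Function.Injective b := hF.injective_of_mem_block (by simp [block])

theorem a_ne_b (i j : Fin 3) : a i ≠ b j := by
  obtain rfl | hij := eq_or_ne i j
  · exact (hF.adj_a_b i).ne
  · exact hF.ne_of_mem_block (by simp [block]) (by simp [block]) hij

theorem x_ne_y (i : Fin 3) : x ≠ y i := fun h => hF.x_notMem_block i (by simp [block, h])

theorem reachableOff_of_mem_block {S : Set V} {i : Fin 3} {v w : V} (hv : v ∈ block y a b i)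
    (hw : w ∈ block y a b i) (hvS : v ∉ S) (hwS : w ∉ S) : ReachableOff G S v w := by
  rcases hF.eq_or_adj_of_mem_block hv hw with rfl | h
  · exact .refl hvS
  · exact h.reachableOff hvS hwS

theorem exists_reachableOff_block (S : Set V) (i : Fin 3) :
    ∃ r, ∀ v ∈ block y a b i, v ∉ S → ReachableOff G S v r := by
  by_cases h : ∃ r ∈ block y a b i, r ∉ S
  · obtain ⟨r, hr, hrS⟩ := h
    exact ⟨r, fun v hv hvS => hF.reachableOff_of_mem_block hv hr hvS hrS⟩
  · exact ⟨x, fun v hv hvS => (h ⟨v, hv, hvS⟩).elim⟩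

theorem reachableOff_x {S : Set V} {i : Fin 3} {v : V} (hv : v ∈ block y a b i) (hvS : v ∉ S)
    (hxS : x ∉ S) (hab : a i ∉ S ∨ b i ∉ S) : ReachableOff G S v x := by
  rcases hab with h | h
  · exact (hF.reachableOff_of_mem_block hv (by simp [block]) hvS h).trans
      ((hF.adj_a_x i).reachableOff h hxS)
  · exact (hF.reachableOff_of_mem_block hv (by simp [block]) hvS h).trans
      ((hF.adj_b_x i).reachableOff h hxS)

theorem compCount_le_card_of_x_notMem_of_forall_y_mem {S : Finset V} (hxS : x ∉ S)
    (hy : ∀ i, y i ∈ S) : compCount G S ≤ S.card := by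
  classical
  have hT : ∀ v ∉ (S : Set V), ∃ t ∈ ({x, z} : Finset V), ReachableOff G S v t := by
    intro v hv
    rcases hF.eq_or_mem_block v with rfl | rfl | ⟨i, hi⟩
    · exact ⟨v, by simp, .refl hv⟩
    · exact ⟨v, by simp, .refl hv⟩
    · refine ⟨x, by simp, hF.reachableOff_x hi hv hxS ?_⟩
      simp only [block, Set.mem_insert_iff, Set.mem_singleton_iff] at hi
      rcases hi with rfl | rfl | rfl
      exacts [absurd (hy i) hv, .inl hv, .inr hv]
  calc compCount G S ≤ ({x, z} : Finset V).card := compCount_le_card _ hT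
    _ ≤ (univ.image y).card := by
      rw [card_image_of_injective _ hF.y_injective]
      exact card_le_two.trans (by simp)
    _ ≤ S.card := card_le_card fun t ht => by
      obtain ⟨i, -, rfl⟩ := mem_image.mp ht
      exact hy i

/-- Every component of `G - S` other than that of `x` is `{y i}` for a block `i` with
`a i, b i ∈ S`; the vertex `z` joins the component of `y g`. -/
theorem compCount_le_card_of_x_notMem_of_y_notMem {S : Finset V} {g : Fin 3} (hxS : x ∉ S)
    (hg : y g ∉ S) (h1 : 1 < compCount G S) : compCount G S ≤ S.card := by
  classical
  set F := univ.filter fun i => a i ∈ S ∧ b i ∈ S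
  have hblock : ∀ i, ∀ v ∈ block y a b i, v ∉ S →
      ∃ t ∈ insert x (F.image y), ReachableOff G S v t := by
    intro i v hi hv
    by_cases hiF : i ∈ F
    · refine ⟨v, mem_insert_of_mem (mem_image.mpr ⟨i, hiF, ?_⟩), .refl hv⟩
      simp only [F, mem_filter] at hiF
      simp only [block, Set.mem_insert_iff, Set.mem_singleton_iff] at hi
      rcases hi with rfl | rfl | rfl
      exacts [rfl, absurd hiF.2.1 hv, absurd hiF.2.2 hv]
    · refine ⟨x, mem_insert_self _ _, hF.reachableOff_x hi hv hxS ?_⟩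
      simpa [F, or_iff_not_imp_left] using hiF
  have hT : ∀ v ∉ (S : Set V), ∃ t ∈ insert x (F.image y), ReachableOff G S v t := by
    intro v hv
    rcases hF.eq_or_mem_block v with rfl | rfl | ⟨i, hi⟩
    · exact ⟨v, mem_insert_self _ _, .refl hv⟩
    · obtain ⟨t, ht, hgt⟩ := hblock g (y g) (by simp [block]) hg
      exact ⟨t, ht, ((hF.adj_z_y g).reachableOff hv hg).trans hgt⟩
    · exact hblock i v hi hv
  have hcard := (compCount_le_card _ hT).trans (card_insert_le _ _)
  have hcardF : (F.image a ∪ F.image b).card = 2 * F.card := by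
    rw [card_union_of_disjoint, card_image_of_injective _ hF.a_injective,
      card_image_of_injective _ hF.b_injective, two_mul]
    simp only [Finset.disjoint_left, mem_image, not_exists, not_and]
    rintro _ ⟨i, -, rfl⟩ j - h
    exact hF.a_ne_b i j h.symm
  have hsub : F.image a ∪ F.image b ⊆ S := by
    simp only [union_subset_iff, image_subset_iff]
    exact ⟨fun i hi => (mem_filter.mp hi).2.1, fun i hi => (mem_filter.mp hi).2.2⟩
  have := card_le_card hsub
  have := card_image_le (s := F) (f := y)
  omega

theorem compCount_le_card_of_x_mem_of_z_notMem {S : Finset V} (hxS : x ∈ S) (hzS : z ∉ S) :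
    compCount G S ≤ S.card := by
  classical
  choose r hr using hF.exists_reachableOff_block (S : Set V)
  set Q := univ.filter fun i => y i ∈ S
  have hT : ∀ v ∉ (S : Set V), ∃ t ∈ insert z (Q.image r), ReachableOff G S v t := by
    intro v hv
    rcases hF.eq_or_mem_block v with rfl | rfl | ⟨i, hi⟩
    · exact absurd hxS hv
    · exact ⟨v, mem_insert_self _ _, .refl hv⟩
    · by_cases hyi : y i ∈ S
      · exact ⟨r i, mem_insert_of_mem (mem_image_of_mem r (by simp [Q, hyi])), hr i v hi hv⟩
      · exact ⟨z, mem_insert_self _ _,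
          (hF.reachableOff_of_mem_block hi (by simp [block]) hv hyi).trans
            ((hF.adj_z_y i).symm.reachableOff hyi hzS)⟩
  have hx : x ∉ Q.image y := by
    simp only [mem_image, not_exists, not_and]
    exact fun i _ h => hF.x_ne_y i h.symm
  calc compCount G S ≤ (insert z (Q.image r)).card := compCount_le_card _ hT
    _ ≤ Q.card + 1 := (card_insert_le _ _).trans (Nat.succ_le_succ card_image_le)
    _ = (insert x (Q.image y)).card := by
      rw [card_insert_of_notMem hx, card_image_of_injective _ hF.y_injective]
    _ ≤ S.card := card_le_card <| insert_subset hxS <| image_subset_iff.mpr fun i hi =>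
      (mem_filter.mp hi).2

theorem compCount_le_card_of_x_mem_of_z_mem {S : Finset V} (hxS : x ∈ S) (hzS : z ∈ S) :
    compCount G S ≤ S.card := by
  classical
  choose r hr using hF.exists_reachableOff_block (S : Set V)
  by_cases hy : y 0 ∉ S ∧ y 1 ∉ S
  · have hT : ∀ v ∉ (S : Set V), ∃ t ∈ ({y 0, r 2} : Finset V), ReachableOff G S v t := by
      intro v hv
      rcases hF.eq_or_mem_block v with rfl | rfl | ⟨i, hi⟩
      · exact absurd hxS hv
      · exact absurd hzS hv
      · fin_cases i
        · exact ⟨y 0, by simp, hF.reachableOff_of_mem_block hi (by simp [block]) hv hy.1⟩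
        · exact ⟨y 0, by simp, (hF.reachableOff_of_mem_block hi (by simp [block]) hv hy.2).trans
            (hF.adj_y_zero_one.symm.reachableOff hy.2 hy.1)⟩
        · exact ⟨r 2, by simp, hr 2 v hi hv⟩
    calc compCount G S ≤ ({y 0, r 2} : Finset V).card := compCount_le_card _ hT
      _ ≤ ({x, z} : Finset V).card := card_le_two.trans (by simp [hF.x_ne_z])
      _ ≤ S.card := card_le_card (by simp [insert_subset_iff, hxS, hzS])
  · obtain ⟨k, hk⟩ : ∃ k, y k ∈ S := by
      rw [not_and_or, not_not, not_not] at hy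
      exact hy.elim (⟨0, ·⟩) (⟨1, ·⟩)
    calc compCount G S ≤ (univ.image r).card :=
          compCount_le_card _ fun v hv => by
            obtain rfl | rfl | ⟨i, hi⟩ := hF.eq_or_mem_block v
            · exact absurd hxS hv
            · exact absurd hzS hv
            · exact ⟨r i, mem_image_of_mem r (mem_univ i), hr i v hi hv⟩
      _ ≤ ({x, z, y k} : Finset V).card := by
        rw [card_insert_of_notMem (by simp [hF.x_ne_z, hF.x_ne_y]),
          card_pair (hF.adj_z_y k).ne]
        exact card_image_le.trans (by simp)
      _ ≤ S.card := card_le_card (by simp [insert_subset_iff, hxS, hzS, hk])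

theorem oneTough [Fintype V] : OneTough G := by
  intro S h1
  by_cases hxS : x ∈ S
  · by_cases hzS : z ∈ S
    · exact hF.compCount_le_card_of_x_mem_of_z_mem hxS hzS
    · exact hF.compCount_le_card_of_x_mem_of_z_notMem hxS hzS
  · by_cases hy : ∀ i, y i ∈ S
    · exact hF.compCount_le_card_of_x_notMem_of_forall_y_mem hxS hy
    · obtain ⟨g, hg⟩ := not_forall.mp hy
      exact hF.compCount_le_card_of_x_notMem_of_y_notMem hxS hg h1

/-- `{x, y 0}` cuts `{a 0, b 0}` off from `z`. -/
theorem exists_separated_pair [DecidableEq V] : ∃ u v, u ∉ (↑({x, y 0} : Finset V) : Set V) ∧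
    v ∉ (↑({x, y 0} : Finset V) : Set V) ∧ ¬ ReachableOff G ↑({x, y 0} : Finset V) u v := by
  have ha := hF.adj_a_x 0
  have hay := hF.adj_a_y 0
  have hzy := hF.adj_z_y 0
  refine ⟨a 0, z, by simp [ha.ne, hay.ne], by simp [hF.x_ne_z.symm, hzy.ne], fun h => ?_⟩
  have hK : ∀ p q, G.Adj p q → p ∉ (↑({x, y 0} : Finset V) : Set V) →
      q ∉ (↑({x, y 0} : Finset V) : Set V) → p ∈ ({a 0, b 0} : Set V) →
      q ∈ ({a 0, b 0} : Set V) := by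
    rintro p q hpq - hq (rfl | rfl)
    · rw [← mem_neighborSet, hF.neighborSet_a] at hpq
      simp_all
    · rw [← mem_neighborSet, hF.neighborSet_b] at hpq
      simp_all
  have hz : z ∈ ({a 0, b 0} : Set V) := h.mem_of_closed hK (by simp)
  exact hF.z_notMem_block 0 (by simp only [block, Set.mem_insert_iff] at hz ⊢; tauto)

/-- If no edge of `c` joins `x` to block `i`, then `a i`, `b i` can only use their edges to `y i`
and to each other, so `c` would be the triangle on block `i` and miss the other blocks. -/
theorem exists_cycle_edge_x_block [DecidableEq V] {u : V} {c : G.Walk u u} (hc : c.IsCycle)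
    (hdom : IsDominating c) (i : Fin 3) : ∃ w ∈ block y a b i, s(x, w) ∈ c.edges := by
  by_contra! hx
  have hN {v : V} (hv : v ∈ block y a b i) :
      c.toSubgraph.neighborSet v ⊆ G.neighborSet v \ {x} := fun w hw => by
    refine ⟨c.toSubgraph.neighborSet_subset v hw, fun hwx => hx v hv ?_⟩
    have := Walk.adj_toSubgraph_iff_mem_edges.mp hw
    rwa [Set.mem_singleton_iff.mp hwx, Sym2.eq_swap] at this
  have hNa (ha : a i ∈ c.support) : c.toSubgraph.neighborSet (a i) = {y i, b i} :=
    hc.neighborSet_toSubgraph_eq_of_subset ha <| (hN (by simp [block])).trans <| by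
      rw [hF.neighborSet_a]; exact fun w ⟨hw, hwx⟩ => by simp_all
  have hNb (hb : b i ∈ c.support) : c.toSubgraph.neighborSet (b i) = {y i, a i} :=
    hc.neighborSet_toSubgraph_eq_of_subset hb <| (hN (by simp [block])).trans <| by
      rw [hF.neighborSet_b]; exact fun w ⟨hw, hwx⟩ => by simp_all
  obtain ⟨ha, hb⟩ : a i ∈ c.support ∧ b i ∈ c.support := by
    rcases hdom _ _ (hF.adj_a_b i) with ha | hb
    · exact ⟨ha, c.mem_support_of_mem_neighborSet_toSubgraph (p := a i) (by simp [hNa ha])⟩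
    · exact ⟨c.mem_support_of_mem_neighborSet_toSubgraph (p := b i) (by simp [hNb hb]), hb⟩
  have hsupp := hc.support_subset_of_neighborSet_toSubgraph_eq (hF.a_ne_b i i) ha (hNa ha) (hNb hb)
  have hi : i + 1 ≠ i := by fin_cases i <;> decide
  rcases hdom _ _ (hF.adj_a_b (i + 1)) with h | h
  · exact hF.ne_of_mem_block (by simp [block]) (hsupp _ h) hi rfl
  · exact hF.ne_of_mem_block (by simp [block]) (hsupp _ h) hi rfl

/-- `x` would need a cycle edge into each of the three blocks. -/
theorem not_isDominating [DecidableEq V] {u : V} {c : G.Walk u u} (hc : c.IsCycle) :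
    ¬ IsDominating c := by
  intro hdom
  choose w hwB hwx using hF.exists_cycle_edge_x_block hc hdom
  have hne {i j : Fin 3} (hij : i ≠ j) : w i ≠ w j := hF.ne_of_mem_block (hwB i) (hwB j) hij
  have hsub : {w 0, w 1, w 2} ⊆ c.toSubgraph.neighborSet x := by
    intro v hv
    simp only [Set.mem_insert_iff, Set.mem_singleton_iff] at hv
    rcases hv with rfl | rfl | rfl <;> exact Walk.adj_toSubgraph_iff_mem_edges.mpr (hwx _)
  have := (Set.ncard_le_ncard hsub c.finite_neighborSet_toSubgraph).trans
    (hc.ncard_neighborSet_toSubgraph_le_two x)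
  rw [Set.ncard_eq_three.mpr ⟨_, _, _, hne (by decide), hne (by decide), hne (by decide), rfl⟩]
    at this
  omega

end IsF2Frame

theorem eq_of_mem_of_inter_eq_singleton {ι : Type*} {A : ι → Set V} {x v : V}
    (hA : ∀ i j, i ≠ j → A i ∩ A j = {x}) {i j : ι} (hij : i ≠ j) (hi : v ∈ A i)
    (hj : v ∈ A j) : v = x := by
  have : v ∈ A i ∩ A j := ⟨hi, hj⟩
  rwa [hA i j hij] at this

theorem IsF2Frame.of_partition {G : SimpleGraph V} {x z : V} {y a b : Fin 3 → V}
    {A : Fin 3 → Set V} (hInter : ∀ i j, i ≠ j → A i ∩ A j = {x})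
    (hUniv : (⋃ i, A i) ∪ {z} = Set.univ) (hzA : z ∉ ⋃ i, A i) (hyx : ∀ i, y i ≠ x)
    (hA : ∀ i, A i = {x, y i, a i, b i}) (ha : ∀ i, G.neighborSet (a i) = {x, y i, b i})
    (hb : ∀ i, G.neighborSet (b i) = {x, y i, a i}) (hzy : ∀ i, G.Adj z (y i))
    (hy : G.Adj (y 0) (y 1)) : IsF2Frame G x z y a b := by
  have hxa (i : Fin 3) : x ≠ a i := (G.ne_of_adj (by rw [← mem_neighborSet, ha i]; simp)).symm
  have hxb (i : Fin 3) : x ≠ b i := (G.ne_of_adj (by rw [← mem_neighborSet, hb i]; simp)).symm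
  have hzA' (i : Fin 3) : z ∉ A i := fun hz => hzA (Set.mem_iUnion.mpr ⟨i, hz⟩)
  have hblock {i : Fin 3} {v : V} (hv : v ∈ block y a b i) : v ∈ A i ∧ v ≠ x := by
    simp only [block, Set.mem_insert_iff, Set.mem_singleton_iff] at hv
    rw [hA i]
    rcases hv with rfl | rfl | rfl
    exacts [⟨by simp, hyx i⟩, ⟨by simp, (hxa i).symm⟩, ⟨by simp, (hxb i).symm⟩]
  refine ⟨fun h => hzA' 0 (by simp [hA, h]), fun i hx => (hblock hx).2 rfl,
    fun i hz => hzA' i (hblock hz).1, fun i j hij => Set.disjoint_left.mpr fun v hi hj =>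
      (hblock hi).2 (eq_of_mem_of_inter_eq_singleton hInter hij (hblock hi).1 (hblock hj).1),
    fun v => ?_, ha, hb, hzy, hy⟩
  obtain hv | rfl := (Set.ext_iff.mp hUniv v).mpr trivial
  · obtain ⟨i, hi⟩ := Set.mem_iUnion.mp hv
    rw [hA i] at hi
    simp only [block, Set.mem_insert_iff, Set.mem_singleton_iff] at hi ⊢
    rcases hi with h | h <;> [exact .inl h; exact .inr (.inr ⟨i, h⟩)]
  · exact .inr (.inl rfl)

theorem InF2.exists_isF2Frame [Fintype V] {G : SimpleGraph V} [DecidableRel G.Adj] (h : InF2 G) :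
    ∃ x z y a b, IsF2Frame G x z y a b := by
  obtain ⟨x, z, y₁, y₂, y₃, A, hInter, hUniv, hzA, hy₁A, hy₂A, hy₃A, hy₁x, hy₂x, hy₃x,
    hzy₁, hzy₂, hzy₃, hy₁₂, hEdge, hCard, hδ⟩ := h
  set y : Fin 3 → V := ![y₁, y₂, y₃]
  have hyA : ∀ i, y i ∈ A i := by intro i; fin_cases i <;> assumption
  have hyx : ∀ i, y i ≠ x := by intro i; fin_cases i <;> assumption
  have hzy : ∀ i, G.Adj z (y i) := by intro i; fin_cases i <;> assumption
  have hxA (i : Fin 3) : x ∈ A i := by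
    have : x ∈ A i ∩ A (i + 1) := by rw [hInter _ _ (by fin_cases i <;> decide)]; rfl
    exact this.1
  have hsub (i : Fin 3) : ∀ v ∈ A i, v ≠ x → v ≠ y i → G.neighborSet v ⊆ A i := by
    intro v hv hvx hvy w hw
    rcases hEdge v w hw with ⟨j, hvj, hwj⟩ | hsp
    · obtain rfl : j = i :=
        by_contra fun hji => hvx (eq_of_mem_of_inter_eq_singleton hInter hji hvj hv)
      exact hwj
    · -- the extra edges of `𝔉₂` only join vertices among `x`, `z`, `y₁`, `y₂`, `y₃`
      have hvz : v ≠ z := fun h => hzA (Set.mem_iUnion.mpr ⟨i, h ▸ hv⟩)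
      have hvy' (j : Fin 3) : v ≠ y j := by
        obtain rfl | hij := eq_or_ne i j
        · exact hvy
        · exact fun h => hvx (eq_of_mem_of_inter_eq_singleton hInter hij hv (h ▸ hyA j))
      have := hvy' 0; have := hvy' 1; have := hvy' 2
      simp only [Set.mem_insert_iff, Set.mem_singleton_iff, Sym2.eq_iff] at hsp
      simp_all [y]
  choose a b hA ha hb using fun i =>
    exists_eq_of_ncard_eq_four ((Nat.card_coe_set_eq (A i)).symm.trans (hCard i)) hδ (hxA i)
      (hyA i) (hyx i).symm (hsub i)
  exact ⟨x, z, y, a, b, .of_partition hInter hUniv hzA hyx hA ha hb hzy hy₁₂⟩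

theorem stmt_16 [Fintype V] [DecidableEq V] (G : SimpleGraph V) [DecidableRel G.Adj]
    (h : InF2 G) :
    ConnectivityEqTwo G ∧ ToughnessEqOne G ∧
    ∀ (u : V) (c : G.Walk u u), IsLongestCycle c → ¬ IsDominating c := by
  obtain ⟨x, z, y, a, b, hF⟩ := h.exists_isF2Frame
  have htough := hF.oneTough
  obtain ⟨p, q, hp, hq, hpq⟩ := hF.exists_separated_pair
  have hcut := one_lt_compCount hp hq hpq
  have hcard : ({x, y 0} : Finset V).card = 2 := card_pair (hF.x_ne_y 0)
  have hV : 1 < Fintype.card V := Fintype.one_lt_card_iff.mpr ⟨x, z, hF.x_ne_z⟩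
  refine ⟨⟨fun S hS => htough.connected_induce_compl hS (by omega), {x, y 0}, hcard,
      fun hconn => hpq ⟨hp, hq, hconn.preconnected _ _⟩⟩,
    ⟨htough, {x, y 0}, hcut, by have := htough _ hcut; omega⟩,
    fun _ _ hc => hF.not_isDominating hc.1⟩

end Paper
end
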